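/- arXiv:1705.06631 — 11 statements merged into one kernel-verified Lean document; each statement's English description precedes it below -/
import Mathlib

section
/- For every K ∈ ℕ with K ≥ 1, max over real K' ∈ [0,K] of min{(√2·K' + K - K')/(√2·K), (√2·K' + 2(K - K'))/(2K)} equals (1 + 1/√2)/2. -/
/-- For every `K ≥ 1`, the maximum over `K' ∈ [0,K]` of
`min{(√2·K' + K - K')/(√2·K), (√2·K' + 2(K - K'))/(2K)}` equals `(1 + 1/√2)/2`. -/
theorem stmt_3 (K : ℕ) (hK : 1 ≤ K) :
    IsGreatest
      {y : ℝ | ∃ K' ∈ Set.Icc (0:ℝ) (K : ℝ),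
        y = min ((Real.sqrt 2 * K' + (K : ℝ) - K') / (Real.sqrt 2 * K))
              ((Real.sqrt 2 * K' + 2 * ((K : ℝ) - K')) / (2 * K))}
      ((1 + 1 / Real.sqrt 2) / 2) := by
  have hs : Real.sqrt 2 ^ 2 = 2 := Real.sq_sqrt (by norm_num)
  have hs0 : (0:ℝ) < Real.sqrt 2 := Real.sqrt_pos.mpr (by norm_num)
  have hK0 : (0:ℝ) < (K:ℝ) := by exact_mod_cast hK
  set s := Real.sqrt 2
  constructor
  · refine ⟨(K:ℝ)/2, ⟨by positivity, by linarith⟩, ?_⟩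
    have h1 : (s * ((K:ℝ)/2) + (K:ℝ) - (K:ℝ)/2) / (s * K) = (1 + 1/s)/2 := by
      field_simp
      nlinarith [hs, hs0, hK0]
    have h2 : (s * ((K:ℝ)/2) + 2 * ((K:ℝ) - (K:ℝ)/2)) / (2 * K) = (1 + 1/s)/2 := by
      field_simp
      nlinarith [hs, hs0, hK0]
    rw [h1, h2, min_self]
  · rintro y ⟨K', ⟨h0, h1⟩, rfl⟩
    rcases le_or_gt K' ((K:ℝ)/2) with h | h
    · refine le_trans (min_le_left _ _) ?_
      rw [div_le_iff₀ (by positivity)]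
      have hs1 : 1 ≤ s := by nlinarith
      have he : (1 + 1/s)/2 * (s * (K:ℝ)) = (s+1) * K / 2 := by
        field_simp
      rw [he]
      nlinarith [mul_le_mul_of_nonneg_left h (sub_nonneg.mpr hs1)]
    · refine le_trans (min_le_right _ _) ?_
      rw [div_le_iff₀ (by positivity)]
      have hsle : s ≤ 2 := by nlinarith
      have he : (1 + 1/s)/2 * (2 * (K:ℝ)) = (K:ℝ) + s * K / 2 := by
        field_simp
        nlinarith [hs]
      rw [he]
      nlinarith [mul_le_mul_of_nonneg_left h.le (sub_nonneg.mpr hsle)]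
end

section
/- Let G be a graph with nonnegative edge weights w, and for k ∈ ℕ let OPT_k be the maximum weight of a matching of size at most k. Then the function k ↦ OPT_k is concave, i.e., OPT_k + OPT_{k+2} ≤ 2·OPT_{k+1} for all k ∈ ℕ. -/
/-- A finset of edges of a simple graph forms a matching if all its edges are edges of
the graph and distinct edges share no vertex. -/
def IsMatchingFinset {V : Type*} [DecidableEq V] (G : SimpleGraph V)
    (M : Finset (Sym2 V)) : Prop :=
  (∀ e ∈ M, e ∈ G.edgeSet) ∧
    ∀ e ∈ M, ∀ f ∈ M, e ≠ f → ∀ v : V, ¬(v ∈ e ∧ v ∈ f)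

/-!
Let `A` be a heaviest matching with at most `k` edges and `B` one with at most `k + 2`. If
`|B| ≤ k + 1`, both compete for `OPT_{k+1}`. Otherwise `|A| < |B|`, so some connected component of
the line graph of `A ∪ B` contains more edges of `B` than of `A`. An `A`-edge meets at most two
`B`-edges, so along a breadth-first search from a `B`-edge of that component every `A`-edge is the
predecessor of at most one `B`-edge: the component has exactly one more `B`-edge than `A`-edge.
Exchanging `A` and `B` on it gives two matchings with `|A| + 1` and `|B| - 1` edges, both at most
`k + 1`, and total weight `w(A) + w(B)`.
-/

open Finset

namespace SimpleGraph

variable {W : Type*} {H : SimpleGraph W}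

lemma Reachable.exists_adj_dist_add_one_eq {u v : W} (hr : H.Reachable u v) (hne : u ≠ v) :
    ∃ w, H.Adj w v ∧ H.dist u w + 1 = H.dist u v := by
  obtain ⟨p, hp⟩ := hr.symm.exists_walk_length_eq_dist
  cases p with
  | nil => exact absurd rfl hne
  | cons hadj q =>
    refine ⟨_, hadj.symm, ?_⟩
    have hq : H.dist u _ ≤ q.length := dist_comm (G := H) ▸ H.dist_le q
    rw [Walk.length_cons, dist_comm] at hp
    rcases hadj.symm.diff_dist_adj (u := u) with h | h | h <;> omega

lemma exists_card_filter_reachable_lt [DecidableRel H.Reachable]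
    {A B : Finset W} (h : A.card < B.card) :
    ∃ b ∈ B, b ∉ A ∧ (A.filter (H.Reachable b)).card < (B.filter (H.Reachable b)).card := by
  classical
  set t := (A ∪ B).image H.connectedComponentMk
  have hmaps : ∀ s ⊆ A ∪ B, (s : Set W).MapsTo H.connectedComponentMk t :=
    fun s hs x hx => mem_image_of_mem _ (hs hx)
  rw [card_eq_sum_card_fiberwise (hmaps A subset_union_left),
    card_eq_sum_card_fiberwise (hmaps B subset_union_right)] at h
  obtain ⟨c, -, hc⟩ := exists_lt_of_sum_lt h
  obtain ⟨b, hbB, hbA⟩ := exists_mem_notMem_of_card_lt_card hc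
  have hbc : H.connectedComponentMk b = c := (mem_filter.mp hbB).2
  have hfiber (s : Finset W) :
      s.filter (H.connectedComponentMk · = c) = s.filter (H.Reachable b) :=
    filter_congr fun x _ => by rw [← hbc, ConnectedComponent.eq, reachable_comm]
  refine ⟨b, (mem_filter.mp hbB).1, fun hb => hbA (mem_filter.mpr ⟨hb, hbc⟩), ?_⟩
  rwa [← hfiber, ← hfiber]

lemma card_filter_reachable_le_add_one [DecidableRel H.Reachable]
    {A B : Finset W} (hA : ∀ a ∈ A, ∀ x, H.Adj a x → x ∈ B)
    (hB : ∀ b ∈ B, ∀ x, H.Adj b x → x ∈ A)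
    (hdeg : ∀ a ∈ A, ∀ x ∈ B, ∀ y ∈ B, ∀ z ∈ B, H.Adj a x → H.Adj a y → H.Adj a z →
      x = y ∨ x = z ∨ y = z)
    {b₀ : W} (hb₀B : b₀ ∈ B) (hb₀A : b₀ ∉ A) :
    (B.filter (H.Reachable b₀)).card ≤ (A.filter (H.Reachable b₀)).card + 1 := by
  classical
  set R := (B.filter (H.Reachable b₀)).erase b₀
  have hR {b : W} (hb : b ∈ R) : b ∈ B ∧ H.Reachable b₀ b := mem_filter.mp (mem_of_mem_erase hb)
  have hpred : ∀ b ∈ R, ∃ a, H.Adj a b ∧ H.dist b₀ a + 1 = H.dist b₀ b := fun b hb =>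
    (hR hb).2.exists_adj_dist_add_one_eq (ne_of_mem_erase hb).symm
  choose! π hπadj hπdist using hpred
  have hmaps : Set.MapsTo π R (A.filter (H.Reachable b₀)) := fun b hb =>
    mem_filter.mpr ⟨hB b (hR hb).1 _ (hπadj b hb).symm, (hR hb).2.trans (hπadj b hb).symm.reachable⟩
  -- An `A`-vertex `a ≠ b₀` is adjacent to its own predecessor in `B`, so it can be the predecessor
  -- of at most one further `B`-vertex.
  have hinj : Set.InjOn π R := by
    intro b₁ hb₁ b₂ hb₂ heq
    obtain ⟨haA, hreach⟩ := mem_filter.mp (hmaps hb₁)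
    obtain ⟨c, hcadj, hcdist⟩ := hreach.exists_adj_dist_add_one_eq fun h => hb₀A (h ▸ haA)
    have h₁ := hπdist b₁ hb₁
    have h₂ := hπdist b₂ hb₂
    rw [← heq] at h₂
    rcases hdeg _ haA b₁ (hR hb₁).1 b₂ (hR hb₂).1 c (hA _ haA c hcadj.symm) (hπadj b₁ hb₁)
      (heq ▸ hπadj b₂ hb₂) hcadj.symm with h | h | h
    · exact h
    · have := congrArg (H.dist b₀) h; omega
    · have := congrArg (H.dist b₀) h; omega
  have := card_le_card_of_injOn π hmaps hinj
  rw [card_erase_of_mem (mem_filter.mpr ⟨hb₀B, Reachable.refl _⟩)] at this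
  omega

end SimpleGraph

-- Unlike `SimpleGraph.lineGraph`, this lives on all of `Sym2 V`, which avoids subtypes.
def lineGraphOn {V : Type*} (E : Finset (Sym2 V)) : SimpleGraph (Sym2 V) where
  Adj e f := e ≠ f ∧ e ∈ E ∧ f ∈ E ∧ ∃ v, v ∈ e ∧ v ∈ f
  symm := ⟨fun _ _ ⟨hne, he, hf, v, hve, hvf⟩ => ⟨hne.symm, hf, he, v, hvf, hve⟩⟩
  loopless := ⟨fun _ h => h.1 rfl⟩

@[simp]
lemma lineGraphOn_adj {V : Type*} {E : Finset (Sym2 V)} {e f : Sym2 V} :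
    (lineGraphOn E).Adj e f ↔ e ≠ f ∧ e ∈ E ∧ f ∈ E ∧ ∃ v, v ∈ e ∧ v ∈ f :=
  Iff.rfl

namespace IsMatchingFinset

variable {V : Type*} [DecidableEq V] {G : SimpleGraph V} {A B : Finset (Sym2 V)}

lemma eq_of_mem_of_mem (hA : IsMatchingFinset G A) {e f : Sym2 V} (he : e ∈ A) (hf : f ∈ A)
    {v : V} (hve : v ∈ e) (hvf : v ∈ f) : e = f :=
  by_contra fun hne => hA.2 e he f hf hne v ⟨hve, hvf⟩

lemma notMem_of_lineGraphOn_adj (hA : IsMatchingFinset G A) {E : Finset (Sym2 V)}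
    {e f : Sym2 V} (hadj : (lineGraphOn E).Adj e f) (he : e ∈ A) : f ∉ A := fun hf =>
  have ⟨hne, _, _, _, hve, hvf⟩ := lineGraphOn_adj.mp hadj
  hne (hA.eq_of_mem_of_mem he hf hve hvf)

lemma eq_or_eq_or_eq_of_lineGraphOn_adj (hB : IsMatchingFinset G B) {E : Finset (Sym2 V)}
    {e f₁ f₂ f₃ : Sym2 V} (hf₁ : f₁ ∈ B) (hf₂ : f₂ ∈ B) (hf₃ : f₃ ∈ B)
    (h₁ : (lineGraphOn E).Adj e f₁) (h₂ : (lineGraphOn E).Adj e f₂)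
    (h₃ : (lineGraphOn E).Adj e f₃) : f₁ = f₂ ∨ f₁ = f₃ ∨ f₂ = f₃ := by
  obtain ⟨-, -, -, v₁, hv₁e, hv₁⟩ := lineGraphOn_adj.mp h₁
  obtain ⟨-, -, -, v₂, hv₂e, hv₂⟩ := lineGraphOn_adj.mp h₂
  obtain ⟨-, -, -, v₃, hv₃e, hv₃⟩ := lineGraphOn_adj.mp h₃
  -- The three meeting points lie on the edge `e = s(x, y)`, so two of them coincide.
  induction e using Sym2.ind with
  | _ x y =>
    simp only [Sym2.mem_iff] at hv₁e hv₂e hv₃e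
    rcases hv₁e with rfl | rfl <;> rcases hv₂e with rfl | rfl <;> rcases hv₃e with rfl | rfl <;>
      first
      | exact .inl (hB.eq_of_mem_of_mem hf₁ hf₂ hv₁ hv₂)
      | exact .inr (.inl (hB.eq_of_mem_of_mem hf₁ hf₃ hv₁ hv₃))
      | exact .inr (.inr (hB.eq_of_mem_of_mem hf₂ hf₃ hv₂ hv₃))

lemma sdiff_union_inter (hA : IsMatchingFinset G A) (hB : IsMatchingFinset G B)
    {C : Finset (Sym2 V)}
    (hC : ∀ e ∈ A, ∀ f ∈ B, ∀ v, v ∈ e → v ∈ f → (e ∈ C ↔ f ∈ C)) :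
    IsMatchingFinset G (A \ C ∪ B ∩ C) := by
  refine ⟨fun e he => ?_, fun e he f hf hne v ⟨hve, hvf⟩ => ?_⟩
  · rcases mem_union.mp he with he | he
    exacts [hA.1 e (mem_sdiff.mp he).1, hB.1 e (mem_inter.mp he).1]
  simp only [mem_union, mem_sdiff, mem_inter] at he hf
  rcases he with ⟨heA, heC⟩ | ⟨heB, heC⟩ <;> rcases hf with ⟨hfA, hfC⟩ | ⟨hfB, hfC⟩
  · exact hA.2 e heA f hfA hne v ⟨hve, hvf⟩
  · exact heC ((hC e heA f hfB v hve hvf).mpr hfC)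
  · exact hfC ((hC f hfA e heB v hvf hve).mpr heC)
  · exact hB.2 e heB f hfB hne v ⟨hve, hvf⟩

lemma exists_augmenting_set (hA : IsMatchingFinset G A) (hB : IsMatchingFinset G B)
    (h : A.card < B.card) :
    ∃ C : Finset (Sym2 V), (∀ e ∈ A, ∀ f ∈ B, ∀ v, v ∈ e → v ∈ f → (e ∈ C ↔ f ∈ C)) ∧
      (B ∩ C).card = (A ∩ C).card + 1 := by
  classical
  set H := lineGraphOn (A ∪ B)
  obtain ⟨b₀, hb₀B, hb₀A, hlt⟩ := H.exists_card_filter_reachable_lt h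
  have hAB : ∀ a ∈ A, ∀ x, H.Adj a x → x ∈ B := fun a ha x hx =>
    (mem_union.mp (lineGraphOn_adj.mp hx).2.2.1).resolve_left (hA.notMem_of_lineGraphOn_adj hx ha)
  have hBA : ∀ b ∈ B, ∀ x, H.Adj b x → x ∈ A := fun b hb x hx =>
    (mem_union.mp (lineGraphOn_adj.mp hx).2.2.1).resolve_right (hB.notMem_of_lineGraphOn_adj hx hb)
  have hle := H.card_filter_reachable_le_add_one hAB hBA
    (fun _ _ _ hx _ hy _ hz => hB.eq_or_eq_or_eq_of_lineGraphOn_adj hx hy hz) hb₀B hb₀A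
  refine ⟨(A ∪ B).filter (H.Reachable b₀), fun e he f hf v hve hvf => ?_, ?_⟩
  · rcases eq_or_ne e f with rfl | hne
    · rfl
    have hadj : H.Adj e f :=
      lineGraphOn_adj.mpr ⟨hne, mem_union_left _ he, mem_union_right _ hf, v, hve, hvf⟩
    simp only [mem_filter, mem_union_left _ he, mem_union_right _ hf, true_and]
    exact ⟨fun h => h.trans hadj.reachable, fun h => h.trans hadj.symm.reachable⟩
  · rw [inter_filter, inter_filter, inter_eq_left.mpr subset_union_right,
      inter_eq_left.mpr subset_union_left]
    omega

lemma exists_exchange (hA : IsMatchingFinset G A) (hB : IsMatchingFinset G B)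
    (h : A.card < B.card) :
    ∃ N₁ N₂ : Finset (Sym2 V), IsMatchingFinset G N₁ ∧ IsMatchingFinset G N₂ ∧
      N₁.card = A.card + 1 ∧ N₂.card + 1 = B.card ∧
      ∀ w : Sym2 V → ℝ, ∑ e ∈ N₁, w e + ∑ e ∈ N₂, w e = ∑ e ∈ A, w e + ∑ e ∈ B, w e := by
  obtain ⟨C, hC, hcard⟩ := exists_augmenting_set hA hB h
  have hdisj (S T : Finset (Sym2 V)) : Disjoint (S \ C) (T ∩ C) :=
    disjoint_left.mpr fun _ hS hT => (mem_sdiff.mp hS).2 (mem_inter.mp hT).2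
  refine ⟨A \ C ∪ B ∩ C, B \ C ∪ A ∩ C, hA.sdiff_union_inter hB hC,
    hB.sdiff_union_inter hA fun e he f hf v hve hvf => (hC f hf e he v hvf hve).symm,
    ?_, ?_, fun w => ?_⟩
  · rw [card_union_of_disjoint (hdisj A B), ← card_inter_add_card_sdiff A C]
    omega
  · rw [card_union_of_disjoint (hdisj B A), ← card_inter_add_card_sdiff B C]
    omega
  · rw [sum_union (hdisj A B), sum_union (hdisj B A), ← sum_inter_add_sum_sdiff A C,
      ← sum_inter_add_sum_sdiff B C]
    ring

end IsMatchingFinset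

theorem stmt_4_general {V : Type*} [DecidableEq V] (G : SimpleGraph V)
    (w : Sym2 V → ℝ) (OPT : ℕ → ℝ)
    (hOPT : ∀ k, IsGreatest
      {x : ℝ | ∃ M : Finset (Sym2 V), IsMatchingFinset G M ∧ M.card ≤ k ∧
        x = ∑ e ∈ M, w e} (OPT k)) :
    ∀ k, OPT k + OPT (k + 2) ≤ 2 * OPT (k + 1) := by
  intro k
  obtain ⟨A, hA, hAk, hOPT₀⟩ := (hOPT k).1
  obtain ⟨B, hB, hBk, hOPT₂⟩ := (hOPT (k + 2)).1
  have le_OPT {M : Finset (Sym2 V)} (hM : IsMatchingFinset G M) (hMk : M.card ≤ k + 1) :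
      ∑ e ∈ M, w e ≤ OPT (k + 1) :=
    (hOPT (k + 1)).2 ⟨M, hM, hMk, rfl⟩
  rw [hOPT₀, hOPT₂]
  by_cases hBk' : B.card ≤ k + 1
  · linarith [le_OPT hA (by omega), le_OPT hB hBk']
  · obtain ⟨N₁, N₂, hN₁, hN₂, hcard₁, hcard₂, hsum⟩ := hA.exists_exchange hB (by omega)
    linarith [le_OPT hN₁ (by omega), le_OPT hN₂ (by omega), hsum w]

/-- For a graph with nonnegative edge weights, the map `k ↦ OPT_k`, where `OPT_k` is the
maximum weight of a matching of size at most `k`, is concave: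
`OPT_k + OPT_{k+2} ≤ 2·OPT_{k+1}`. -/
theorem stmt_4 {V : Type*} [Fintype V] [DecidableEq V] (G : SimpleGraph V)
    (w : Sym2 V → ℝ) (hw : ∀ e, 0 ≤ w e) (OPT : ℕ → ℝ)
    (hOPT : ∀ k, IsGreatest
      {x : ℝ | ∃ M : Finset (Sym2 V), IsMatchingFinset G M ∧ M.card ≤ k ∧
        x = ∑ e ∈ M, w e} (OPT k)) :
    ∀ k, OPT k + OPT (k + 2) ≤ 2 * OPT (k + 1) :=
  stmt_4_general G w OPT hOPT
end

section
/- Let M be a maximum-weight matching of size at most k and M' a maximum-weight matching of size at most k+2 in a weighted graph, with |M| < |M'|. Then there exist matchings M₁ of size at most k+1 and M₂ of size at most k+1 with w(M₁) + w(M₂) = w(M) + w(M'). -/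
open Finset SimpleGraph
open scoped symmDiff

namespace Finset

variable {α β : Type*} [DecidableEq α] {s t u : Finset α}

lemma inter_eq_sdiff_of_subset_symmDiff (hu : u ⊆ s ∆ t) : u ∩ s = u \ t := by
  ext x
  have := @hu x
  simp only [mem_inter, mem_sdiff, mem_symmDiff] at this ⊢
  tauto

lemma sdiff_subset_of_subset_symmDiff (hu : u ⊆ s ∆ t) : u \ s ⊆ t := fun x hx ↦ by
  have := hu (mem_sdiff.1 hx).1
  simp_all [mem_symmDiff]

lemma sum_symmDiff_add_sum_sdiff_of_subset_symmDiff [AddCommMonoid β] (hu : u ⊆ s ∆ t)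
    (f : α → β) : ∑ x ∈ s ∆ u, f x + ∑ x ∈ u \ t, f x = ∑ x ∈ s, f x + ∑ x ∈ u \ s, f x := by
  rw [symmDiff_def, sup_eq_union, sum_union disjoint_sdiff_sdiff, ← sum_inter_add_sum_sdiff s u,
    inter_comm, inter_eq_sdiff_of_subset_symmDiff hu]
  abel

lemma card_symmDiff_add_card_sdiff_of_subset_symmDiff (hu : u ⊆ s ∆ t) :
    #(s ∆ u) + #(u \ t) = #s + #(u \ s) := by
  simpa only [card_eq_sum_ones] using sum_symmDiff_add_sum_sdiff_of_subset_symmDiff hu (fun _ ↦ 1)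

end Finset

namespace IsMatchingFinset

variable {V : Type*} [DecidableEq V] {G : SimpleGraph V} {M M' N Q : Finset (Sym2 V)}

lemma mono (hM : IsMatchingFinset G M) (hN : N ⊆ M) : IsMatchingFinset G N :=
  ⟨fun e he ↦ hM.1 e (hN he), fun e he f hf ↦ hM.2 e (hN he) f (hN hf)⟩

lemma card_biUnion_toFinset (hM : IsMatchingFinset G M) :
    #(M.biUnion Sym2.toFinset) = 2 * #M := by
  rw [card_biUnion, mul_comm, ← smul_eq_mul, ← sum_const]
  · exact sum_congr rfl fun e he ↦
      Sym2.card_toFinset_of_not_isDiag e (G.not_isDiag_of_mem_edgeSet (hM.1 e he))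
  · intro e he f hf hef
    exact disjoint_left.2 fun v hve hvf ↦
      hM.2 e he f hf hef v ⟨Sym2.mem_toFinset.1 hve, Sym2.mem_toFinset.1 hvf⟩

lemma no_common_vertex_of_mem_sdiff_of_mem_sdiff (hM' : IsMatchingFinset G M') (hQ : Q ⊆ M ∆ M')
    (hclosed : ∀ f ∈ Q, ∀ g ∈ M ∆ M', ∀ v ∈ f, v ∈ g → g ∈ Q)
    {e f : Sym2 V} (he : e ∈ M \ Q) (hf : f ∈ Q \ M) (v : V) : ¬(v ∈ e ∧ v ∈ f) := by
  rintro ⟨hve, hvf⟩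
  have hfM' : f ∈ M' := sdiff_subset_of_subset_symmDiff hQ hf
  rw [mem_sdiff] at he hf
  by_cases heM' : e ∈ M'
  · exact hM'.2 e heM' f hfM' (by rintro rfl; exact hf.2 he.1) v ⟨hve, hvf⟩
  · exact he.2 (hclosed f hf.1 e (mem_symmDiff.2 (Or.inl ⟨he.1, heM'⟩)) v hvf hve)

lemma symmDiff_of_subset_symmDiff (hM : IsMatchingFinset G M) (hM' : IsMatchingFinset G M')
    (hQ : Q ⊆ M ∆ M') (hclosed : ∀ f ∈ Q, ∀ g ∈ M ∆ M', ∀ v ∈ f, v ∈ g → g ∈ Q) :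
    IsMatchingFinset G (M ∆ Q) := by
  have hQM' := sdiff_subset_of_subset_symmDiff hQ
  refine ⟨fun e he ↦ ?_, fun e he f hf hef v ↦ ?_⟩
  · rcases mem_symmDiff.1 he with he | he
    · exact hM.1 e he.1
    · exact hM'.1 e (hQM' (mem_sdiff.2 he))
  · rw [symmDiff_def, sup_eq_union, mem_union] at he hf
    rcases he with he | he <;> rcases hf with hf | hf
    · exact hM.2 e (mem_sdiff.1 he).1 f (mem_sdiff.1 hf).1 hef v
    · exact no_common_vertex_of_mem_sdiff_of_mem_sdiff hM' hQ hclosed he hf v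
    · exact fun h ↦ no_common_vertex_of_mem_sdiff_of_mem_sdiff hM' hQ hclosed hf he v h.symm
    · exact hM'.2 e (hQM' he) f (hQM' hf) hef v

end IsMatchingFinset

section Components

variable {V : Type*} (D : Finset (Sym2 V))

/-- The component of an arbitrary endpoint of `e`; for `e ∈ D` every endpoint gives the same one
(`edgeComponent_eq`). -/
noncomputable def edgeComponent (e : Sym2 V) :
    (fromEdgeSet (D : Set (Sym2 V))).ConnectedComponent :=
  (fromEdgeSet (D : Set (Sym2 V))).connectedComponentMk e.out.1

open scoped Classical in
noncomputable def componentEdges (C : (fromEdgeSet (D : Set (Sym2 V))).ConnectedComponent) :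
    Finset (Sym2 V) :=
  {e ∈ D | edgeComponent D e = C}

variable {D}

lemma edgeComponent_eq {e : Sym2 V} (he : e ∈ D) {v : V} (hv : v ∈ e) :
    edgeComponent D e = (fromEdgeSet (D : Set (Sym2 V))).connectedComponentMk v := by
  by_cases h : e.out.1 = v
  · rw [edgeComponent, h]
  · apply ConnectedComponent.sound
    refine Adj.reachable ⟨?_, h⟩
    change s(_, v) ∈ (D : Set (Sym2 V))
    rwa [← (Sym2.mem_and_mem_iff h).1 ⟨e.out_fst_mem, hv⟩]

lemma mem_componentEdges {C} {e : Sym2 V} :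
    e ∈ componentEdges D C ↔ e ∈ D ∧ edgeComponent D e = C := by
  simp [componentEdges]

lemma mem_componentEdges_of_mem {C} {e f : Sym2 V} (he : e ∈ componentEdges D C) (hf : f ∈ D)
    {v : V} (hve : v ∈ e) (hvf : v ∈ f) : f ∈ componentEdges D C := by
  rw [mem_componentEdges] at he ⊢
  rw [← he.2, edgeComponent_eq hf hvf, edgeComponent_eq he.1 hve]
  exact ⟨hf, rfl⟩

lemma card_edgeSet_toSimpleGraph_le (C : (fromEdgeSet (D : Set (Sym2 V))).ConnectedComponent) :
    Nat.card C.toSimpleGraph.edgeSet ≤ #(componentEdges D C) := by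
  rw [← Set.ncard_coe_finset, ← Nat.card_coe_set_eq]
  refine Nat.card_le_card_of_injective
    (fun e ↦ ⟨Sym2.map Subtype.val e.1, ?_⟩) fun e f hef ↦ ?_
  · obtain ⟨e, he⟩ := e
    induction e using Sym2.ind with
    | _ a b =>
      have hab : s(a.1, b.1) ∈ D := ((C.toSimpleGraph_adj a.2 b.2).1 he).1
      rw [Sym2.map_mk, mem_coe, mem_componentEdges, edgeComponent_eq hab (Sym2.mem_mk_left _ _)]
      exact ⟨hab, (ConnectedComponent.mem_supp_iff _ _).1 a.2⟩
  · exact Subtype.ext (Sym2.map.injective Subtype.val_injective (congrArg Subtype.val hef))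

lemma IsMatchingFinset.two_mul_card_le_card_componentEdges_add_one [Finite V] [DecidableEq V]
    {G : SimpleGraph V} {N : Finset (Sym2 V)} (hN : IsMatchingFinset G N)
    {C : (fromEdgeSet (D : Set (Sym2 V))).ConnectedComponent} (hNC : N ⊆ componentEdges D C) :
    2 * #N ≤ #(componentEdges D C) + 1 := by
  have hverts : (N.biUnion Sym2.toFinset : Set V) ⊆ C.supp := fun v hv ↦ by
    obtain ⟨e, he, hve⟩ := mem_biUnion.1 hv
    have he := mem_componentEdges.1 (hNC he)
    rw [ConnectedComponent.mem_supp_iff, ← edgeComponent_eq he.1 (Sym2.mem_toFinset.1 hve), he.2]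
  calc 2 * #N = #(N.biUnion Sym2.toFinset) := hN.card_biUnion_toFinset.symm
    _ ≤ Nat.card C.supp := by
      rw [Nat.card_coe_set_eq, ← Set.ncard_coe_finset]
      exact Set.ncard_le_ncard hverts
    _ ≤ Nat.card C.toSimpleGraph.edgeSet + 1 :=
      C.connected_toSimpleGraph.card_vert_le_card_edgeSet_add_one
    _ ≤ #(componentEdges D C) + 1 := by grw [card_edgeSet_toSimpleGraph_le]

lemma exists_card_componentEdges_sdiff_lt [Finite V] [DecidableEq V] {X Y : Finset (Sym2 V)}
    (h : #(D \ X) < #(D \ Y)) : ∃ C, #(componentEdges D C \ X) < #(componentEdges D C \ Y) := by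
  classical
  have := Fintype.ofFinite (fromEdgeSet (D : Set (Sym2 V))).ConnectedComponent
  have hfiber (Z : Finset (Sym2 V)) :
      #(D \ Z) = ∑ C, #(componentEdges D C \ Z) := by
    rw [card_eq_sum_card_fiberwise (f := edgeComponent D) (t := univ)
      fun _ _ ↦ mem_coe.2 (mem_univ _)]
    congr! 2 with C
    ext e
    simp [mem_componentEdges, and_right_comm]
  rw [hfiber, hfiber] at h
  obtain ⟨C, -, hC⟩ := exists_lt_of_sum_lt h
  exact ⟨C, hC⟩

lemma IsMatchingFinset.exists_augmenting [Finite V] [DecidableEq V] {G : SimpleGraph V}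
    {M M' : Finset (Sym2 V)} (hM : IsMatchingFinset G M) (hM' : IsMatchingFinset G M')
    (hlt : #M < #M') :
    ∃ Q ⊆ M ∆ M', IsMatchingFinset G (M ∆ Q) ∧ IsMatchingFinset G (M' ∆ Q) ∧
      #(M ∆ Q) = #M + 1 ∧ #(M' ∆ Q) + 1 = #M' := by
  obtain ⟨C, hC⟩ := exists_card_componentEdges_sdiff_lt (D := M ∆ M') (X := M') (Y := M)
    (by rwa [symmDiff_sdiff_right, symmDiff_sdiff_left, card_sdiff_lt_card_sdiff_iff])
  set Q := componentEdges (M ∆ M') C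
  have hQ : Q ⊆ M ∆ M' := fun _ he ↦ (mem_componentEdges.1 he).1
  have hQ' : Q ⊆ M' ∆ M := symmDiff_comm M M' ▸ hQ
  have hclosed : ∀ f ∈ Q, ∀ g ∈ M ∆ M', ∀ v ∈ f, v ∈ g → g ∈ Q :=
    fun _ hf _ hg _ hvf hvg ↦ mem_componentEdges_of_mem hf hg hvf hvg
  have hexcess : #(Q \ M) = #(Q \ M') + 1 := by
    have hsize : 2 * #(Q \ M) ≤ #Q + 1 :=
      (hM'.mono (sdiff_subset_of_subset_symmDiff hQ)).two_mul_card_le_card_componentEdges_add_one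
        sdiff_subset
    have hsplit := card_sdiff_add_card_inter Q M
    rw [inter_eq_sdiff_of_subset_symmDiff hQ] at hsplit
    omega
  have hcard := card_symmDiff_add_card_sdiff_of_subset_symmDiff hQ
  have hcard' := card_symmDiff_add_card_sdiff_of_subset_symmDiff hQ'
  refine ⟨Q, hQ, hM.symmDiff_of_subset_symmDiff hM' hQ hclosed,
    hM'.symmDiff_of_subset_symmDiff hM hQ' (symmDiff_comm M M' ▸ hclosed), by omega, by omega⟩

end Components

theorem stmt_5_general {V : Type*} [Fintype V] [DecidableEq V] (G : SimpleGraph V)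
    (w : Sym2 V → ℝ) (k : ℕ) (M M' : Finset (Sym2 V))
    (hMmem : IsMatchingFinset G M ∧ M.card ≤ k)
    (hM'mem : IsMatchingFinset G M' ∧ M'.card ≤ k + 2)
    (hcard : M.card < M'.card) :
    ∃ M₁ M₂ : Finset (Sym2 V),
      IsMatchingFinset G M₁ ∧ M₁.card ≤ k + 1 ∧
      IsMatchingFinset G M₂ ∧ M₂.card ≤ k + 1 ∧
      (∑ e ∈ M₁, w e) + (∑ e ∈ M₂, w e) = (∑ e ∈ M, w e) + (∑ e ∈ M', w e) := by
  obtain ⟨Q, hQ, hM₁, hM₂, hcard₁, hcard₂⟩ := hMmem.1.exists_augmenting hM'mem.1 hcard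
  refine ⟨M ∆ Q, M' ∆ Q, hM₁, by omega, hM₂, by omega, ?_⟩
  have hsum := sum_symmDiff_add_sum_sdiff_of_subset_symmDiff hQ w
  have hsum' := sum_symmDiff_add_sum_sdiff_of_subset_symmDiff (symmDiff_comm M M' ▸ hQ) w
  linarith

/-- If `M` is a maximum-weight matching of size at most `k` and `M'` a maximum-weight
matching of size at most `k+2`, with `|M| < |M'|`, then there are matchings `M₁`, `M₂`,
each of size at most `k+1`, with `w(M₁) + w(M₂) = w(M) + w(M')`. -/
theorem stmt_5 {V : Type*} [Fintype V] [DecidableEq V] (G : SimpleGraph V)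
    (w : Sym2 V → ℝ) (hw : ∀ e, 0 ≤ w e) (k : ℕ) (M M' : Finset (Sym2 V))
    (hM : IsGreatest
      {x : ℝ | ∃ N : Finset (Sym2 V), IsMatchingFinset G N ∧ N.card ≤ k ∧
        x = ∑ e ∈ N, w e} (∑ e ∈ M, w e))
    (hMmem : IsMatchingFinset G M ∧ M.card ≤ k)
    (hM' : IsGreatest
      {x : ℝ | ∃ N : Finset (Sym2 V), IsMatchingFinset G N ∧ N.card ≤ k + 2 ∧
        x = ∑ e ∈ N, w e} (∑ e ∈ M', w e))
    (hM'mem : IsMatchingFinset G M' ∧ M'.card ≤ k + 2)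
    (hcard : M.card < M'.card) :
    ∃ M₁ M₂ : Finset (Sym2 V),
      IsMatchingFinset G M₁ ∧ M₁.card ≤ k + 1 ∧
      IsMatchingFinset G M₂ ∧ M₂.card ≤ k + 1 ∧
      (∑ e ∈ M₁, w e) + (∑ e ∈ M₂, w e) = (∑ e ∈ M, w e) + (∑ e ∈ M', w e) :=
  stmt_5_general G w k M M' hMmem hM'mem hcard
end

section
/- Let I be an independence system on finite ground set E with nonnegative weights w. If for every bit-function (a weight function whose values are integer powers of 2) every lexicographically maximal independent set S satisfies w(S_k) = OPT_k for all k, then for every bit-function the function k ↦ OPT_k is concave. -/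
/-- The weights of the elements of `S`, sorted in decreasing order. -/
noncomputable def sortedDesc {E : Type*} (w : E → ℝ) (S : Finset E) : List ℝ :=
  (S.val.map w).sort (· ≥ ·)

/-- `w(S_k)`: the total weight of the `k` heaviest elements of `S`. -/
noncomputable def wTop {E : Type*} (w : E → ℝ) (k : ℕ) (S : Finset E) : ℝ :=
  ((sortedDesc w S).take k).sum

/-- `S` is `w`-lexicographically larger than `T`: the decreasing weight sequence of `T`
is lexicographically smaller than that of `S`. -/
def LexGt {E : Type*} (w : E → ℝ) (S T : Finset E) : Prop :=
  List.Lex (· < ·) (sortedDesc w T) (sortedDesc w S)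

/-- `S` is a lexicographically maximal independent set of the system `I`. -/
def LexMaximal {E : Type*} (I : Finset E → Prop) (w : E → ℝ) (S : Finset E) : Prop :=
  I S ∧ ∀ T, I T → ¬ LexGt w T S

/-- A bit-function: all weights are integer powers of `2`. -/
def IsBitFunction {E : Type*} (w : E → ℝ) : Prop := ∀ e, ∃ ℓ : ℤ, w e = 2 ^ ℓ

/-! Under the hypothesis, `OPT_k = w(S_k)` for one lexicographically maximal `S`, and the prefix
sums of a decreasing sequence of nonnegative numbers are concave: their increments are the
terms themselves, then `0` once the sequence is exhausted. -/

lemma IsBitFunction.nonneg {E : Type*} {w : E → ℝ} (hw : IsBitFunction w) (e : E) : 0 ≤ w e := by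
  obtain ⟨ℓ, hℓ⟩ := hw e
  rw [hℓ]
  positivity

lemma List.sum_take_add_sum_take_add_two_le {l : List ℝ} (hl : l.Pairwise (· ≥ ·))
    (hnonneg : ∀ x ∈ l, 0 ≤ x) (k : ℕ) :
    (l.take k).sum + (l.take (k + 2)).sum ≤ 2 * (l.take (k + 1)).sum := by
  rcases lt_or_ge (k + 1) l.length with hlt | hge
  · rw [List.sum_take_succ _ _ hlt, List.sum_take_succ _ _ (by omega)]
    have hdec : l[k + 1] ≤ l[k] := hl.rel_get_of_lt (a := ⟨k, by omega⟩) (b := ⟨k + 1, hlt⟩)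
      (by simp [Fin.lt_def])
    linarith
  · rw [List.take_of_length_le (by omega : l.length ≤ k + 2), List.take_of_length_le hge]
    have hdrop : 0 ≤ (l.drop k).sum :=
      List.sum_nonneg fun x hx ↦ hnonneg x (List.mem_of_mem_drop hx)
    linarith [List.sum_take_add_sum_drop l k]

lemma sortedDesc_pairwise {E : Type*} (w : E → ℝ) (S : Finset E) :
    (sortedDesc w S).Pairwise (· ≥ ·) :=
  Multiset.pairwise_sort _ _

lemma sortedDesc_nonneg {E : Type*} {w : E → ℝ} (hw : ∀ e, 0 ≤ w e) (S : Finset E) :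
    ∀ x ∈ sortedDesc w S, 0 ≤ x := by
  intro x hx
  obtain ⟨e, -, rfl⟩ := Multiset.mem_map.mp ((Multiset.mem_sort _).mp hx)
  exact hw e

lemma wTop_add_wTop_add_two_le {E : Type*} {w : E → ℝ} (hw : ∀ e, 0 ≤ w e) (S : Finset E)
    (k : ℕ) : wTop w k S + wTop w (k + 2) S ≤ 2 * wTop w (k + 1) S :=
  List.sum_take_add_sum_take_add_two_le (sortedDesc_pairwise w S) (sortedDesc_nonneg hw S) k

lemma exists_lexMaximal {E : Type*} [Fintype E] {I : Finset E → Prop} (hI : ∃ S, I S)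
    (w : E → ℝ) : ∃ S, LexMaximal I w S := by
  classical
  obtain ⟨S₀, hS₀⟩ := hI
  obtain ⟨S, hS, hmax⟩ := Finset.exists_max_image (Finset.univ.filter I) (sortedDesc w)
    ⟨S₀, by simpa using hS₀⟩
  refine ⟨S, (Finset.mem_filter.mp hS).2, fun T hT hlex ↦ ?_⟩
  exact (hmax T (by simpa using hT)).not_gt hlex

theorem stmt_7_general {E : Type*} [Fintype E]
    (I : Finset E → Prop) (hne : I ∅)
    (hgood : ∀ w : E → ℝ, IsBitFunction w → ∀ S : Finset E, LexMaximal I w S →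
      ∀ k, IsGreatest {x : ℝ | ∃ T : Finset E, I T ∧ T.card ≤ k ∧ x = ∑ e ∈ T, w e}
        (wTop w k S)) :
    ∀ w : E → ℝ, IsBitFunction w → ∀ OPT : ℕ → ℝ,
      (∀ k, IsGreatest {x : ℝ | ∃ T : Finset E, I T ∧ T.card ≤ k ∧ x = ∑ e ∈ T, w e}
        (OPT k)) →
      ∀ k, OPT k + OPT (k + 2) ≤ 2 * OPT (k + 1) := by
  intro w hw OPT hOPT k
  obtain ⟨S, hS⟩ := exists_lexMaximal ⟨∅, hne⟩ w
  have hOPT_eq : ∀ j, OPT j = wTop w j S := fun j ↦ (hOPT j).unique (hgood w hw S hS j)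
  simpa only [hOPT_eq] using wTop_add_wTop_add_two_le hw.nonneg S k

/-- If, for every bit-function, every lexicographically maximal independent set `S`
satisfies `w(S_k) = OPT_k` for all `k` (i.e. the system is good), then for every
bit-function the map `k ↦ OPT_k` is concave. -/
theorem stmt_7 {E : Type*} [Fintype E] [DecidableEq E]
    (I : Finset E → Prop) (hne : I ∅) (hdc : ∀ S T : Finset E, S ⊆ T → I T → I S)
    (hgood : ∀ w : E → ℝ, IsBitFunction w → ∀ S : Finset E, LexMaximal I w S →
      ∀ k, IsGreatest {x : ℝ | ∃ T : Finset E, I T ∧ T.card ≤ k ∧ x = ∑ e ∈ T, w e}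
        (wTop w k S)) :
    ∀ w : E → ℝ, IsBitFunction w → ∀ OPT : ℕ → ℝ,
      (∀ k, IsGreatest {x : ℝ | ∃ T : Finset E, I T ∧ T.card ≤ k ∧ x = ∑ e ∈ T, w e}
        (OPT k)) →
      ∀ k, OPT k + OPT (k + 2) ≤ 2 * OPT (k + 1) :=
  stmt_7_general I hne hgood
end

section
/- Every deletion of a bit-concave independence system is bit-concave: if I ⊆ 2^E is an independence system such that for every weight function taking values in integer powers of 2 the function k ↦ OPT_k is concave, and X ⊆ E, then the system I \ X = {S ∈ I : S ∩ X = ∅} has the same property. -/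
/-- An independence system `I` is bit-concave if for every bit-function `w` the map
`k ↦ OPT_k = max{w(S) : S ∈ I, |S| ≤ k}` is concave. -/
def BitConcave {E : Type*} (I : Finset E → Prop) : Prop :=
  ∀ w : E → ℝ, IsBitFunction w → ∀ OPT : ℕ → ℝ,
    (∀ k, IsGreatest {x : ℝ | ∃ S : Finset E, I S ∧ S.card ≤ k ∧ x = ∑ e ∈ S, w e}
      (OPT k)) →
    ∀ k, OPT k + OPT (k + 2) ≤ 2 * OPT (k + 1)

lemma aux_isGreatest {E : Type*} [Fintype E] (I : Finset E → Prop) (h0 : I ∅)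
    (w : E → ℝ) (k : ℕ) :
    IsGreatest {x : ℝ | ∃ S : Finset E, I S ∧ S.card ≤ k ∧ x = ∑ e ∈ S, w e}
      (sSup {x : ℝ | ∃ S : Finset E, I S ∧ S.card ≤ k ∧ x = ∑ e ∈ S, w e}) := by
  set s := {x : ℝ | ∃ S : Finset E, I S ∧ S.card ≤ k ∧ x = ∑ e ∈ S, w e} with hs
  have hfin : s.Finite := by
    apply Set.Finite.subset (Set.finite_range (fun S : Finset E => ∑ e ∈ S, w e))
    rintro x ⟨S, -, -, rfl⟩
    exact ⟨S, rfl⟩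
  have hne : s.Nonempty := ⟨0, ∅, h0, by simp, by simp⟩
  exact ⟨hne.csSup_mem hfin, fun y hy => le_csSup hfin.bddAbove hy⟩

/-- Every deletion of a bit-concave independence system is bit-concave. -/
theorem stmt_8 {E : Type*} [Fintype E] [DecidableEq E]
    (I : Finset E → Prop) (hne : I ∅) (hdc : ∀ S T : Finset E, S ⊆ T → I T → I S)
    (hbc : BitConcave I) (X : Finset E) :
    BitConcave (fun S => I S ∧ S ∩ X = ∅) := by
  intro w hw OPT hOPT k
  have key : ∀ n : ℕ, OPT k + OPT (k + 2) ≤ 2 * OPT (k + 1) + 2 * X.card * (1/2 : ℝ) ^ n := by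
    intro n
    have h2 : (2 : ℝ) ^ (-(n : ℤ)) = (1/2 : ℝ) ^ n := by
      rw [zpow_neg, zpow_natCast, one_div, inv_pow]
    set wn : E → ℝ := fun e => if e ∈ X then (2 : ℝ) ^ (-(n : ℤ)) else w e with hwn
    have hbit : IsBitFunction wn := by
      intro e
      by_cases h : e ∈ X
      · exact ⟨-(n : ℤ), by simp [wn, h]⟩
      · obtain ⟨ℓ, hℓ⟩ := hw e
        exact ⟨ℓ, by simp [wn, h, hℓ]⟩
    set OPT' : ℕ → ℝ :=
      fun m => sSup {x : ℝ | ∃ S : Finset E, I S ∧ S.card ≤ m ∧ x = ∑ e ∈ S, wn e} with hOPT'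
    have hG : ∀ m, IsGreatest
        {x : ℝ | ∃ S : Finset E, I S ∧ S.card ≤ m ∧ x = ∑ e ∈ S, wn e} (OPT' m) :=
      fun m => aux_isGreatest I hne wn m
    have hconc := hbc wn hbit OPT' hG k
    have hlow : ∀ m, OPT m ≤ OPT' m := by
      intro m
      obtain ⟨S, ⟨hSI, hSX⟩, hcard, hx⟩ := (hOPT m).1
      refine (hG m).2 ⟨S, hSI, hcard, ?_⟩
      rw [hx]
      refine Finset.sum_congr rfl fun e he => ?_
      have hnX : e ∉ X := fun hX =>
        (Finset.eq_empty_iff_forall_notMem.mp hSX e (Finset.mem_inter.mpr ⟨he, hX⟩))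
      simp [wn, hnX]
    have hup : ∀ m, OPT' m ≤ OPT m + X.card * (1/2 : ℝ) ^ n := by
      intro m
      obtain ⟨S, hSI, hcard, hx⟩ := (hG m).1
      have hsplit : ∑ e ∈ S, wn e
          = ∑ e ∈ S.filter (· ∉ X), w e + (S.filter (· ∈ X)).card * (1/2 : ℝ) ^ n := by
        have hA : ∑ e ∈ S.filter (· ∈ X), wn e = (S.filter (· ∈ X)).card * (1/2 : ℝ) ^ n := by
          rw [Finset.sum_congr rfl (fun e he =>
            show wn e = (1/2 : ℝ) ^ n by simp [wn, (Finset.mem_filter.mp he).2, h2]),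
            Finset.sum_const, nsmul_eq_mul]
        have hB : ∑ e ∈ S.filter (· ∉ X), wn e = ∑ e ∈ S.filter (· ∉ X), w e :=
          Finset.sum_congr rfl fun e he => by simp [wn, (Finset.mem_filter.mp he).2]
        rw [← Finset.sum_filter_add_sum_filter_not S (· ∈ X) wn, hA, hB, add_comm]
      have hmem : ∑ e ∈ S.filter (· ∉ X), w e ≤ OPT m := by
        refine (hOPT m).2 ⟨S.filter (· ∉ X), ⟨hdc _ _ (Finset.filter_subset _ _) hSI, ?_⟩,
          le_trans (Finset.card_le_card (Finset.filter_subset _ _)) hcard, rfl⟩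
        ext e
        simp (config := { contextual := true }) [Finset.mem_inter, Finset.mem_filter]
      have hcardX : ((S.filter (· ∈ X)).card : ℝ) ≤ (X.card : ℝ) := by
        exact_mod_cast Finset.card_le_card (fun e he => (Finset.mem_filter.mp he).2)
      have hpow : (0 : ℝ) ≤ (1/2 : ℝ) ^ n := by positivity
      rw [hx, hsplit]
      have := mul_le_mul_of_nonneg_right hcardX hpow
      linarith
    have h1 := hlow k
    have h2' := hlow (k + 2)
    have h3 := hup (k + 1)
    linarith
  refine le_of_forall_pos_le_add fun ε hε => ?_
  have hden : (0 : ℝ) < 2 * X.card + 1 := by positivity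
  obtain ⟨n, hn⟩ := exists_pow_lt_of_lt_one (div_pos hε hden) (by norm_num : (1/2 : ℝ) < 1)
  have hkey := key n
  have hpow : (0 : ℝ) ≤ (1/2 : ℝ) ^ n := by positivity
  have h1 : 2 * (X.card : ℝ) * (1/2 : ℝ) ^ n ≤ (2 * X.card + 1) * (1/2 : ℝ) ^ n := by nlinarith
  have h2 : (2 * (X.card : ℝ) + 1) * (1/2 : ℝ) ^ n < ε := by
    have := (lt_div_iff₀ hden).mp (by linarith [hn] : (1/2:ℝ)^n < ε / (2 * X.card + 1))
    linarith
  linarith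
end

section
/- Every contraction of a bit-concave independence system is bit-concave: if I is bit-concave and X ∈ I, then I/X = {S ⊆ E∖X : S ∪ X ∈ I} is bit-concave. -/
/-- Every contraction of a bit-concave independence system is bit-concave. -/
theorem stmt_9 {E : Type*} [Fintype E] [DecidableEq E]
    (I : Finset E → Prop) (hne : I ∅) (hdc : ∀ S T : Finset E, S ⊆ T → I T → I S)
    (hbc : BitConcave I) (X : Finset E) (hX : I X) :
    BitConcave (fun S => S ∩ X = ∅ ∧ I (S ∪ X)) := by
  classical
  intro w hw OPT hOPT k
  -- all weights are positive
  have hpos : ∀ e, 0 < w e := by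
    intro e
    obtain ⟨ℓ, h⟩ := hw e
    rw [h]; positivity
  -- a huge power of two
  obtain ⟨n, hn⟩ := pow_unbounded_of_one_lt (∑ e : E, w e) (one_lt_two (α := ℝ))
  set B : ℝ := 2 ^ (n : ℤ) with hBdef
  have hB : (∑ e : E, w e) < B := by
    rw [hBdef, zpow_natCast]; exact hn
  have hBpos : 0 < B := by rw [hBdef]; positivity
  -- the lifted weight
  set w' : E → ℝ := fun e => if e ∈ X then B else w e with hw'def
  have hw' : IsBitFunction w' := by
    intro e
    by_cases he : e ∈ X
    · exact ⟨(n : ℤ), by simp [hw'def, he, hBdef]⟩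
    · obtain ⟨ℓ, h⟩ := hw e
      exact ⟨ℓ, by simp [hw'def, he, h]⟩
  have hw'pos : ∀ e, 0 < w' e := by
    intro e
    by_cases he : e ∈ X <;> simp [hw'def, he, hBpos, hpos e]
  -- the lifted optimum
  have hfne : ∀ m : ℕ, (Finset.univ.filter
      (fun S : Finset E => I S ∧ S.card ≤ m)).Nonempty := by
    intro m
    exact ⟨∅, by simp [hne]⟩
  set OPT' : ℕ → ℝ := fun m =>
    (Finset.univ.filter (fun S : Finset E => I S ∧ S.card ≤ m)).sup' (hfne m)
      (fun S => ∑ e ∈ S, w' e) with hOPT'def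
  have hOPT' : ∀ m, IsGreatest
      {x : ℝ | ∃ S : Finset E, I S ∧ S.card ≤ m ∧ x = ∑ e ∈ S, w' e} (OPT' m) := by
    intro m
    constructor
    · obtain ⟨S, hS, hval⟩ := Finset.exists_mem_eq_sup'
        (hfne m) (fun S => ∑ e ∈ S, w' e)
      simp only [Finset.mem_filter] at hS
      exact ⟨S, hS.2.1, hS.2.2, hval⟩
    · rintro x ⟨S, hIS, hcard, rfl⟩
      exact Finset.le_sup' (fun S => ∑ e ∈ S, w' e)
        (by simp [hIS, hcard])
  -- OPT m is nonnegative
  have hOPTnn : ∀ m, 0 ≤ OPT m := by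
    intro m
    refine (hOPT m).2 ⟨∅, ⟨by simp, by simpa using hX⟩, by simp, by simp⟩
  -- key identity
  have key : ∀ m : ℕ, OPT' (m + X.card) = X.card * B + OPT m := by
    intro m
    have hle1 : (X.card : ℝ) * B + OPT m ≤ OPT' (m + X.card) := by
      obtain ⟨T, ⟨hTX, hTI⟩, hTcard, hTval⟩ := (hOPT m).1
      have hdisj : Disjoint T X := Finset.disjoint_iff_inter_eq_empty.mpr hTX
      refine (hOPT' (m + X.card)).2 ⟨T ∪ X, hTI, ?_, ?_⟩
      · rw [Finset.card_union_of_disjoint hdisj]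
        exact Nat.add_le_add hTcard le_rfl
      · rw [Finset.sum_union hdisj]
        have h1 : ∑ e ∈ T, w' e = ∑ e ∈ T, w e := by
          refine Finset.sum_congr rfl fun e he => ?_
          have : e ∉ X := fun hx =>
            (Finset.notMem_empty e) (hTX ▸ Finset.mem_inter.mpr ⟨he, hx⟩)
          simp [hw'def, this]
        have h2 : ∑ e ∈ X, w' e = X.card * B := by
          rw [Finset.sum_congr rfl fun e he => show w' e = B by simp [hw'def, he]]
          simp [mul_comm]
        rw [h1, h2, hTval]; ring
    have hle2 : OPT' (m + X.card) ≤ (X.card : ℝ) * B + OPT m := by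
      obtain ⟨S, hIS, hcard, hval⟩ := (hOPT' (m + X.card)).1
      rw [hval]
      by_cases hXS : X ⊆ S
      · -- the optimum contains X; S \ X is feasible in the contraction
        have hsplit : S = (S \ X) ∪ X := by
          rw [Finset.sdiff_union_self_eq_union, Finset.union_eq_left.mpr hXS]
        have hdisj : Disjoint (S \ X) X := Finset.sdiff_disjoint
        have hsum : ∑ e ∈ S, w' e = (∑ e ∈ S \ X, w e) + X.card * B := by
          conv_lhs => rw [hsplit]
          rw [Finset.sum_union hdisj]
          congr 1
          · refine Finset.sum_congr rfl fun e he => ?_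
            have : e ∉ X := (Finset.mem_sdiff.mp he).2
            simp [hw'def, this]
          · rw [Finset.sum_congr rfl fun e he => show w' e = B by simp [hw'def, he]]
            simp [mul_comm]
        rw [hsum]
        have hfeas : (S \ X) ∩ X = ∅ ∧ I ((S \ X) ∪ X) :=
          ⟨by simp [Finset.sdiff_inter_self], by rwa [← hsplit]⟩
        have hc : (S \ X).card ≤ m := by
          have := Finset.card_union_of_disjoint hdisj
          rw [← hsplit] at this
          omega
        have : (∑ e ∈ S \ X, w e) ≤ OPT m :=
          (hOPT m).2 ⟨S \ X, hfeas, hc, rfl⟩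
        linarith
      · -- X ⊄ S : the weight is strictly smaller than |X| * B
        have hsplit : (S ∩ X) ∪ (S \ X) = S := by
          ext a; simp only [Finset.mem_union, Finset.mem_inter, Finset.mem_sdiff]; tauto
        have hdisj : Disjoint (S ∩ X) (S \ X) :=
          Finset.disjoint_sdiff.mono_left Finset.inter_subset_right
        have hsum : ∑ e ∈ S, w' e = (S ∩ X).card * B + ∑ e ∈ S \ X, w e := by
          conv_lhs => rw [← hsplit]
          rw [Finset.sum_union hdisj]
          congr 1
          · rw [Finset.sum_congr rfl fun e he => show w' e = B by
              simp [hw'def, (Finset.mem_inter.mp he).2]]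
            simp [mul_comm]
          · refine Finset.sum_congr rfl fun e he => ?_
            have : e ∉ X := (Finset.mem_sdiff.mp he).2
            simp [hw'def, this]
        rw [hsum]
        have hlt : (S ∩ X).card < X.card := by
          refine Finset.card_lt_card ?_
          refine Finset.ssubset_iff_of_subset Finset.inter_subset_right |>.mpr ?_
          obtain ⟨x, hxX, hxS⟩ := Finset.not_subset.mp hXS
          exact ⟨x, hxX, fun hx => hxS (Finset.mem_inter.mp hx).1⟩
        have hcast : ((S ∩ X).card : ℝ) + 1 ≤ (X.card : ℝ) := by exact_mod_cast hlt
        have hsub : ∑ e ∈ S \ X, w e ≤ ∑ e : E, w e :=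
          Finset.sum_le_sum_of_subset_of_nonneg (Finset.subset_univ _)
            (fun e _ _ => (hpos e).le)
        have h0 : 0 ≤ OPT m := hOPTnn m
        nlinarith [hBpos]
    linarith [hle1, hle2]
  have hmain := hbc w' hw' OPT' hOPT' (k + X.card)
  have e1 : k + X.card + 2 = (k + 2) + X.card := by omega
  have e2 : k + X.card + 1 = (k + 1) + X.card := by omega
  rw [e1, e2, key k, key (k + 2), key (k + 1)] at hmain
  linarith
end

section
/- Every k-truncation of a bit-concave independence system is bit-concave: if I is bit-concave and t ∈ ℕ, then I_t = {S ∈ I : |S| ≤ t} is bit-concave. -/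
/-- Every truncation of a bit-concave independence system is bit-concave. -/
theorem stmt_10 {E : Type*} [Fintype E] [DecidableEq E]
    (I : Finset E → Prop) (hne : I ∅) (hdc : ∀ S T : Finset E, S ⊆ T → I T → I S)
    (hbc : BitConcave I) (t : ℕ) :
    BitConcave (fun S => I S ∧ S.card ≤ t) := by
  classical
  intro w hw OPT' hOPT' k
  set Sset : ℕ → Set ℝ :=
    fun k => {x | ∃ S : Finset E, I S ∧ S.card ≤ k ∧ x = ∑ e ∈ S, w e} with hSset
  have hfin : ∀ k, (Sset k).Finite := fun k =>
    (Set.finite_range (fun S : Finset E => ∑ e ∈ S, w e)).subset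
      (by rintro x ⟨S, _, _, rfl⟩; exact ⟨S, rfl⟩)
  have hne' : ∀ k, (Sset k).Nonempty := fun k => ⟨0, ∅, hne, by simp, by simp⟩
  set OPT : ℕ → ℝ := fun k => sSup (Sset k) with hOPTdef
  have hG : ∀ k, IsGreatest (Sset k) (OPT k) := fun k =>
    ⟨(hne' k).csSup_mem (hfin k), fun x hx => le_csSup (hfin k).bddAbove hx⟩
  have hkey : ∀ k, OPT' k = OPT (min k t) := by
    intro k
    apply IsGreatest.unique (hOPT' k)
    have hset : {x : ℝ | ∃ S : Finset E, (I S ∧ S.card ≤ t) ∧ S.card ≤ k ∧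
        x = ∑ e ∈ S, w e} = Sset (min k t) := by
      ext x
      constructor
      · rintro ⟨S, ⟨hS, hst⟩, hsk, rfl⟩; exact ⟨S, hS, le_min hsk hst, rfl⟩
      · rintro ⟨S, hS, hsm, rfl⟩
        exact ⟨S, ⟨hS, (le_min_iff.mp hsm).2⟩, (le_min_iff.mp hsm).1, rfl⟩
    rw [hset]
    exact hG (min k t)
  have hmono : ∀ a b, a ≤ b → OPT a ≤ OPT b := fun a b hab =>
    (hG b).2 (by obtain ⟨S, h1, h2, h3⟩ := (hG a).1; exact ⟨S, h1, h2.trans hab, h3⟩)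
  have hconc := hbc w hw OPT hG
  rw [hkey k, hkey (k+2), hkey (k+1)]
  rcases le_or_gt (k+2) t with h | h
  · rw [min_eq_left (show k ≤ t by omega), min_eq_left (show k+2 ≤ t by omega), min_eq_left (show k+1 ≤ t by omega)]
    exact hconc k
  · rcases le_or_gt t k with h2 | h2
    · rw [min_eq_right (show t ≤ k by omega), min_eq_right (show t ≤ k+2 by omega), min_eq_right (show t ≤ k+1 by omega)]
      linarith
    · have ht : t = k + 1 := by omega
      subst ht
      rw [min_eq_left (show k ≤ k+1 by omega), min_eq_right (show k+1 ≤ k+2 by omega), min_self]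
      have := hmono k (k + 1) (by omega)
      linarith
end

section
/- Every good independence system is 2-extendible: if I is an independence system such that all its t-minors are bit-concave (equivalently, I is good), then for all X, Y ∈ I and y ∈ Y∖X there exists Z ⊆ X∖Y with |Z| ≤ 2 and (X ∪ {y})∖Z ∈ I. -/
/-- `TMinor I J`: `J` is a truncation-minor of `I`, obtained by iterated deletions,
contractions, and truncations. -/
inductive TMinor {E : Type*} [DecidableEq E] :
    (Finset E → Prop) → (Finset E → Prop) → Prop
  | refl (I : Finset E → Prop) : TMinor I I
  | deletion {I J : Finset E → Prop} (X : Finset E) :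
      TMinor I J → TMinor I (fun S => J S ∧ S ∩ X = ∅)
  | contraction {I J : Finset E → Prop} (X : Finset E) (hX : J X) :
      TMinor I J → TMinor I (fun S => S ∩ X = ∅ ∧ J (S ∪ X))
  | truncation {I J : Finset E → Prop} (t : ℕ) :
      TMinor I J → TMinor I (fun S => J S ∧ S.card ≤ t)

/-!
Let `A = X \ Y` and `C = X ∩ Y`, and let `S ⊆ A` be as large as possible with
`S ∪ {y} ∪ C ∈ I`; then `Z = A \ S` works as soon as `|A| ≤ |S| + 2`. Contract `C` and restrict
to `A ∪ {y}`, and give `y` weight `2` and every other element weight `1`. Writing `r = |S|`,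
the optimum with `r + 1` elements is `r + 2` (take `S ∪ {y}`), with `r + 2` elements it is still
`r + 2` (a set containing `y` has at most `r` other elements), but if `|A| ≥ r + 3` the optimum
with `r + 3` elements is at least `r + 3` (any `r + 3` elements of `A`), contradicting
concavity.
-/

open Finset

section

variable {E : Type*}

theorem TMinor.contract_restrict [Fintype E] [DecidableEq E] {I : Finset E → Prop}
    {C : Finset E} (hC : I C) {U : Finset E} (hUC : Disjoint U C) :
    TMinor I (fun S => S ⊆ U ∧ I (S ∪ C)) := by
  convert ((TMinor.refl I).contraction C hC).deletion (univ \ U) using 2 with S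
  rw [← disjoint_iff_inter_eq_empty, ← disjoint_iff_inter_eq_empty, ← compl_eq_univ_sdiff,
    disjoint_compl_right_iff]
  exact ⟨fun h => ⟨⟨hUC.mono_left h.1, h.2⟩, h.1⟩, fun h => ⟨h.2, h.1.2⟩⟩

theorem exists_isGreatest_sum_of_card_le [Fintype E] {J : Finset E → Prop} (hJ : J ∅)
    (w : E → ℝ) (k : ℕ) :
    ∃ m, IsGreatest {x : ℝ | ∃ S : Finset E, J S ∧ S.card ≤ k ∧ x = ∑ e ∈ S, w e} m := by
  set V := {x : ℝ | ∃ S : Finset E, J S ∧ S.card ≤ k ∧ x = ∑ e ∈ S, w e}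
  have hfin : V.Finite :=
    (Set.finite_range fun S : Finset E => ∑ e ∈ S, w e).subset fun x ⟨S, _, _, hx⟩ => ⟨S, hx.symm⟩
  obtain ⟨m, hm, hmax⟩ := Set.exists_max_image V id hfin ⟨0, ∅, hJ, by simp, by simp⟩
  exact ⟨m, hm, hmax⟩

theorem BitConcave.sum_add_sum_le [Fintype E] {J : Finset E → Prop} (hJ : BitConcave J)
    (hJ₀ : J ∅) {w : E → ℝ} (hw : IsBitFunction w) {k : ℕ} {M : ℝ} {S T : Finset E}
    (hS : J S) (hSk : S.card ≤ k) (hT : J T) (hTk : T.card ≤ k + 2)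
    (hM : ∀ U, J U → U.card ≤ k + 1 → ∑ e ∈ U, w e ≤ M) :
    ∑ e ∈ S, w e + ∑ e ∈ T, w e ≤ 2 * M := by
  choose OPT hOPT using exists_isGreatest_sum_of_card_le hJ₀ w
  obtain ⟨⟨U, hU, hUk, hOPTU⟩, -⟩ := hOPT (k + 1)
  calc ∑ e ∈ S, w e + ∑ e ∈ T, w e ≤ OPT k + OPT (k + 2) :=
        add_le_add ((hOPT k).2 ⟨S, hS, hSk, rfl⟩) ((hOPT (k + 2)).2 ⟨T, hT, hTk, rfl⟩)
    _ ≤ 2 * OPT (k + 1) := hJ w hw OPT hOPT k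
    _ ≤ 2 * M := by rw [hOPTU]; linarith [hM U hU hUk]

theorem BitConcave.exists_subset_insert_card_le_add_two [Fintype E] [DecidableEq E]
    {J : Finset E → Prop} (hJ : BitConcave J) (hdc : ∀ S T, S ⊆ T → J T → J S)
    {A : Finset E} {y : E} (hyA : y ∉ A) (hground : ∀ S, J S → S ⊆ insert y A)
    (hA : J A) (hy : J {y}) :
    ∃ S ⊆ A, J (insert y S) ∧ A.card ≤ S.card + 2 := by
  classical
  obtain ⟨S, hS, hSmax⟩ := (A.powerset.filter fun S => J (insert y S)).exists_max_image card
    ⟨∅, by simpa using hy⟩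
  simp only [mem_filter, mem_powerset] at hS hSmax
  refine ⟨S, hS.1, hS.2, ?_⟩
  by_contra! hlt
  obtain ⟨T, hTA, hT⟩ := exists_subset_card_eq (s := A) (n := S.card + 3) (by omega)
  set w : E → ℝ := fun e => if e = y then 2 else 1
  have hw : IsBitFunction w := fun e => by
    by_cases h : e = y
    · exact ⟨1, by simp [w, h]⟩
    · exact ⟨0, by simp [w, h]⟩
  have hsum : ∀ U : Finset E, ∑ e ∈ U, w e = U.card + if y ∈ U then 1 else 0 := by
    intro U
    rw [← sum_ite_eq' U y fun _ => (1 : ℝ), card_eq_sum_ones, Nat.cast_sum, ← sum_add_distrib]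
    refine sum_congr rfl fun e _ => ?_
    by_cases h : e = y <;> norm_num [w, h]
  have hM : ∀ U, J U → U.card ≤ S.card + 2 → ∑ e ∈ U, w e ≤ S.card + 2 := by
    intro U hU hUk
    rw [hsum]
    by_cases hyU : y ∈ U
    · have hUA : U.erase y ⊆ A := fun e he =>
        (mem_insert.1 (hground U hU (mem_of_mem_erase he))).resolve_left (ne_of_mem_erase he)
      have := hSmax (U.erase y) ⟨hUA, by rwa [insert_erase hyU]⟩
      rw [card_erase_of_mem hyU] at this
      simp only [hyU, if_true]
      exact_mod_cast (by omega : U.card + 1 ≤ S.card + 2)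
    · simp only [hyU, if_false, add_zero]
      exact_mod_cast hUk
  have := hJ.sum_add_sum_le (hdc ∅ A (empty_subset A) hA) hw (k := S.card + 1) hS.2
    (by rw [card_insert_of_notMem (fun h => hyA (hS.1 h))]) (hdc T A hTA hA) (by omega) hM
  rw [hsum, hsum, if_pos (mem_insert_self y S), if_neg (fun h => hyA (hTA h)), hT,
    card_insert_of_notMem (fun h => hyA (hS.1 h))] at this
  push_cast at this
  linarith

end

theorem stmt_11_general {E : Type*} [Fintype E] [DecidableEq E]
    (I : Finset E → Prop) (hdc : ∀ S T : Finset E, S ⊆ T → I T → I S)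
    (hgood : ∀ J : Finset E → Prop, TMinor I J → BitConcave J) :
    ∀ X Y : Finset E, I X → I Y → ∀ y ∈ Y \ X,
      ∃ Z ⊆ X \ Y, Z.card ≤ 2 ∧ I (insert y X \ Z) := by
  intro X Y hX hY y hy
  rw [mem_sdiff] at hy
  have hyA : y ∉ X \ Y := fun h => hy.2 (mem_sdiff.1 h).1
  have hdisj : Disjoint (insert y (X \ Y)) (X ∩ Y) := by
    rw [disjoint_insert_left]
    exact ⟨fun h => hy.2 (mem_inter.1 h).1, disjoint_sdiff_inter X Y⟩
  have hJ := hgood _ (TMinor.contract_restrict (hdc _ X inter_subset_left hX) hdisj)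
  obtain ⟨S, hSA, ⟨-, hS⟩, hcard⟩ := hJ.exists_subset_insert_card_le_add_two
    (fun S T hST hT => ⟨hST.trans hT.1, hdc _ _ (union_subset_union hST le_rfl) hT.2⟩)
    hyA (fun S hS => hS.1) ⟨subset_insert _ _, by rwa [sdiff_union_inter]⟩
    ⟨by simp, hdc _ Y (union_subset (singleton_subset_iff.2 hy.1) inter_subset_right) hY⟩
  have hZ : insert y X \ ((X \ Y) \ S) = insert y S ∪ X ∩ Y := by
    ext e
    have := @hSA e
    simp only [mem_sdiff, mem_insert, mem_union, mem_inter] at this ⊢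
    grind
  exact ⟨(X \ Y) \ S, sdiff_subset, by rw [card_sdiff_of_subset hSA]; omega, hZ ▸ hS⟩

/-- Every good independence system (one all of whose t-minors are bit-concave)
is 2-extendible. -/
theorem stmt_11 {E : Type*} [Fintype E] [DecidableEq E]
    (I : Finset E → Prop) (hne : I ∅) (hdc : ∀ S T : Finset E, S ⊆ T → I T → I S)
    (hgood : ∀ J : Finset E → Prop, TMinor I J → BitConcave J) :
    ∀ X Y : Finset E, I X → I Y → ∀ y ∈ Y \ X,
      ∃ Z ⊆ X \ Y, Z.card ≤ 2 ∧ I (insert y X \ Z) :=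
  stmt_11_general I hdc hgood
end

section
/- Every strong 2-exchange system is concave: if I is an independence system such that for all X, Y ∈ I there exists a bipartite graph G(X,Y) on color classes X∖Y and Y∖X with maximum degree at most 2 such that A ∪ (Y ∖ N(A)) ∈ I for every A ⊆ X∖Y, then for every nonnegative weight function the function k ↦ OPT_k is concave. -/
/-!
Take an optimal `X` with `|X| ≤ k` and an optimal `Y` with `|Y| ≤ k + 2`. The exchange graph
`G(X,Y)` is bipartite of maximum degree 2, so in each connected component the two colour classes
differ in size by at most one: a connected graph has at least `|V| - 1` edges, and each colour
class meets every edge and has degree at most 2. Label the components by a Boolean `p` so that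
these imbalances cancel up to one. The splices `S₁ = {x ∈ X | p x} ∪ {y ∈ Y | ¬ p y}` and
`S₂ = {y ∈ Y | p y} ∪ {x ∈ X | ¬ p x}` lie in exchange sets `A ∪ (Y ∖ N(A))` (take for `A` the
part of `X ∖ Y` on one side of `p`; neighbourhoods stay inside components), so they are
independent; their sizes differ by at most one and add up to `|X| + |Y| ≤ 2k + 2`, and their
weights add up to `w(X) + w(Y) = OPT_k + OPT_{k+2}`.
-/

open Finset

theorem Finset.exists_subset_abs_sum_sub_sum_le_one {ι : Type*} [DecidableEq ι] (s : Finset ι)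
    {z : ι → ℤ} (hz : ∀ i ∈ s, |z i| ≤ 1) :
    ∃ T ⊆ s, |∑ i ∈ T, z i - ∑ i ∈ s \ T, z i| ≤ 1 := by
  induction s using Finset.induction_on with
  | empty => exact ⟨∅, subset_rfl, by simp⟩
  | @insert a s ha ih =>
    obtain ⟨T, hTs, hT⟩ := ih fun i hi => hz i (mem_insert_of_mem hi)
    have hza := abs_le.mp (hz a (mem_insert_self a s))
    have haT : a ∉ T := fun h => ha (hTs h)
    set δ := ∑ i ∈ T, z i - ∑ i ∈ s \ T, z i
    rw [abs_le] at hT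
    -- put `a` on the side that pulls `δ` towards zero
    by_cases hsame : (0 < δ ∧ 0 < z a) ∨ (δ < 0 ∧ z a < 0)
    · refine ⟨T, hTs.trans (subset_insert a s), ?_⟩
      rw [insert_sdiff_of_notMem s haT, sum_insert (fun h => ha (mem_sdiff.mp h).1), abs_le]
      omega
    · refine ⟨insert a T, insert_subset_insert a hTs, ?_⟩
      rw [insert_sdiff_insert, sdiff_insert_of_notMem ha, sum_insert haT, abs_le]
      omega

namespace SimpleGraph

variable {V : Type*} {G : SimpleGraph V}

theorem Connected.card_le_card_add_one_of_isBipartiteWith [Fintype V] [DecidableRel G.Adj]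
    (hG : G.Connected) {s t : Finset V} (h : G.IsBipartiteWith s t)
    (ht : ∀ v ∈ t, G.degree v ≤ 2) : #s ≤ #t + 1 := by
  classical
  have hvert : #s + #t ≤ #G.edgeFinset + 1 := calc
    #s + #t = #(s ∪ t) := (card_union_of_disjoint (disjoint_coe.mp h.disjoint)).symm
    _ ≤ Nat.card V := by rw [Nat.card_eq_fintype_card]; exact card_le_univ _
    _ ≤ Nat.card G.edgeSet + 1 := hG.card_vert_le_card_edgeSet_add_one
    _ = #G.edgeFinset + 1 := by rw [Nat.card_eq_fintype_card, edgeFinset_card]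
  have hedge : #G.edgeFinset ≤ 2 * #t := calc
    #G.edgeFinset = ∑ v ∈ t, G.degree v := (isBipartiteWith_sum_degrees_eq_card_edges' h).symm
    _ ≤ ∑ v ∈ t, 2 := sum_le_sum ht
    _ = 2 * #t := by rw [sum_const, smul_eq_mul, mul_comm]
  omega

theorem ConnectedComponent.card_filter_le_card_filter_add_one [Fintype V] [DecidableEq V]
    [DecidableRel G.Adj] {s t : Finset V} (h : G.IsBipartiteWith s t)
    (ht : ∀ v ∈ t, G.degree v ≤ 2) (C : G.ConnectedComponent) :
    #{v ∈ s | v ∈ C.supp} ≤ #{v ∈ t | v ∈ C.supp} + 1 := by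
  classical
  have hconn : (G.induce C.supp).Connected := C.connected_toSimpleGraph
  have hdeg (v : C.supp) : (G.induce C.supp).degree v = G.degree v :=
    degree_induce_of_neighborSet_subset fun _ hw => C.mem_supp_of_adj_mem_supp v.2 hw
  have hbip : (G.induce C.supp).IsBipartiteWith ↑(s.subtype (· ∈ C.supp))
      ↑(t.subtype (· ∈ C.supp)) :=
    ⟨by simpa [Set.disjoint_left] using fun a _ ha => Set.disjoint_left.mp h.disjoint ha,
     fun v w hvw => by simpa using h.mem_of_adj hvw⟩
  have := hconn.card_le_card_add_one_of_isBipartiteWith hbip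
    (by simpa [hdeg] using fun v _ hv => ht v hv)
  simpa only [card_subtype] using this

theorem IsBipartiteWith.exists_balanced_split [Fintype V] [DecidableEq V] [DecidableRel G.Adj]
    {s t : Finset V} (h : G.IsBipartiteWith s t) (hs : ∀ v ∈ s, G.degree v ≤ 2)
    (ht : ∀ v ∈ t, G.degree v ≤ 2) :
    ∃ p : V → Bool, (∀ v w, G.Adj v w → p v = p w) ∧
      |((#{v ∈ s | p v} : ℤ) - #{v ∈ t | p v}) - (#{v ∈ s | !p v} - #{v ∈ t | !p v})| ≤ 1 := by
  classical
  let d (C : G.ConnectedComponent) : ℤ := #{v ∈ s | v ∈ C.supp} - #{v ∈ t | v ∈ C.supp}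
  have hd (C : G.ConnectedComponent) : |d C| ≤ 1 := by
    have := C.card_filter_le_card_filter_add_one h ht
    have := C.card_filter_le_card_filter_add_one h.symm hs
    rw [abs_le]; simp only [d]; omega
  obtain ⟨T, -, hT⟩ := univ.exists_subset_abs_sum_sub_sum_le_one fun C _ => hd C
  refine ⟨fun v => G.connectedComponentMk v ∈ T, fun v w hvw => ?_, ?_⟩
  · simp [ConnectedComponent.connectedComponentMk_eq_of_adj hvw]
  have hfiber (u : Finset V) (T' : Finset G.ConnectedComponent) :
      ∑ C ∈ T', (#{v ∈ u | v ∈ C.supp} : ℤ) = #{v ∈ u | G.connectedComponentMk v ∈ T'} := by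
    simp only [ConnectedComponent.mem_supp_iff]
    exact_mod_cast sum_card_fiberwise_eq_card_filter u T' _
  simp only [d, sum_sub_distrib, hfiber, mem_sdiff, mem_univ, true_and] at hT
  simpa using hT

theorem isBipartiteWith_fromRel {r : V → V → Prop} {s t : Set V} (hst : Disjoint s t)
    (hr : ∀ v w, r v w → v ∈ s ∧ w ∈ t) : (fromRel r).IsBipartiteWith s t :=
  ⟨hst, fun v w hvw => ((fromRel_adj r v w).mp hvw).2.imp (hr v w) fun h => (hr w v h).symm⟩

theorem fromRel_adj_iff_of_mem_left {r : V → V → Prop} {s t : Set V} (hst : Disjoint s t)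
    (hr : ∀ v w, r v w → v ∈ s ∧ w ∈ t) {v w : V} (hv : v ∈ s) :
    (fromRel r).Adj v w ↔ r v w := by
  refine ⟨fun hvw => ((fromRel_adj r v w).mp hvw).2.resolve_right fun h => ?_,
    fun h => (fromRel_adj r v w).mpr ⟨fun hvw => ?_, .inl h⟩⟩
  · exact Set.disjoint_left.mp hst hv (hr w v h).2
  · exact Set.disjoint_left.mp hst hv (hvw ▸ (hr v w h).2)

theorem degree_fromRel_of_mem_left [Fintype V] {r : V → V → Prop} [DecidableRel r]
    [DecidableRel (fromRel r).Adj] {s t : Finset V} (hst : Disjoint s t)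
    (hr : ∀ v w, r v w → v ∈ s ∧ w ∈ t) {v : V} (hv : v ∈ s) :
    (fromRel r).degree v = #{w ∈ t | r v w} := by
  have hbip := isBipartiteWith_fromRel (disjoint_coe.mpr hst) hr
  rw [← card_neighborFinset_eq_degree, isBipartiteWith_neighborFinset hbip hv]
  exact congrArg card (filter_congr fun w _ => fromRel_adj_iff_of_mem_left
    (disjoint_coe.mpr hst) hr hv)

theorem degree_fromRel_of_mem_right [Fintype V] {r : V → V → Prop} [DecidableRel r]
    [DecidableRel (fromRel r).Adj] {s t : Finset V} (hst : Disjoint s t)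
    (hr : ∀ v w, r v w → v ∈ s ∧ w ∈ t) {w : V} (hw : w ∈ t) :
    (fromRel r).degree w = #{v ∈ s | r v w} := by
  have hbip := isBipartiteWith_fromRel (disjoint_coe.mpr hst) hr
  rw [← card_neighborFinset_eq_degree, isBipartiteWith_neighborFinset' hbip hw]
  exact congrArg card (filter_congr fun v hv => fromRel_adj_iff_of_mem_left
    (disjoint_coe.mpr hst) hr hv)

end SimpleGraph

namespace Finset

variable {α : Type*} [DecidableEq α]

def splice (X Y : Finset α) (p : α → Bool) : Finset α := {x ∈ X | p x} ∪ {y ∈ Y | !p y}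

theorem sum_splice {M : Type*} [AddCommMonoid M] (X Y : Finset α) (p : α → Bool) (w : α → M) :
    ∑ a ∈ splice X Y p, w a = ∑ x ∈ X with p x, w x + ∑ y ∈ Y with !p y, w y :=
  sum_union <| disjoint_left.mpr fun _ ha ha' => by simp_all

theorem sum_splice_add_sum_splice_swap {M : Type*} [AddCommMonoid M] (X Y : Finset α)
    (p : α → Bool) (w : α → M) :
    ∑ a ∈ splice X Y p, w a + ∑ a ∈ splice Y X p, w a = ∑ x ∈ X, w x + ∑ y ∈ Y, w y := by
  rw [sum_splice, sum_splice, ← sum_filter_add_sum_filter_not X (fun x => p x),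
    ← sum_filter_add_sum_filter_not Y (fun y => p y)]
  simp only [Bool.not_eq_true, Bool.not_eq_eq_eq_not, Bool.not_true]
  abel

theorem splice_swap (X Y : Finset α) (p : α → Bool) : splice Y X p = splice X Y (!p ·) := by
  rw [splice, splice, union_comm]
  simp only [Bool.not_not]

theorem card_splice (X Y : Finset α) (p : α → Bool) :
    #(splice X Y p) = #{x ∈ X \ Y | p x} + #{y ∈ Y \ X | !p y} + #(X ∩ Y) := by
  have hsplit : splice X Y p = ({x ∈ X \ Y | p x} ∪ {y ∈ Y \ X | !p y}) ∪ X ∩ Y := by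
    ext a; simp only [splice, mem_union, mem_filter, mem_sdiff, mem_inter]; cases p a <;> tauto
  rw [hsplit, card_union_of_disjoint, card_union_of_disjoint]
  · exact disjoint_left.mpr fun _ ha ha' => by simp_all
  · grind [disjoint_left]

theorem splice_subset_union_sdiff_filter {X Y : Finset α} {p : α → Bool} {r : α → α → Prop}
    [DecidableRel r] (hp : ∀ e f, r e f → p e = p f) :
    splice X Y p ⊆ {x ∈ X \ Y | p x} ∪ (Y \ {f ∈ Y \ X | ∃ e ∈ {x ∈ X \ Y | p x}, r e f}) := by
  intro a ha
  simp only [splice, mem_union, mem_filter, mem_sdiff] at ha ⊢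
  grind

theorem exists_balanced_splice [Fintype α] {X Y : Finset α} {r : α → α → Prop} [DecidableRel r]
    (hr : ∀ e f, r e f → e ∈ X \ Y ∧ f ∈ Y \ X)
    (hX : ∀ e ∈ X \ Y, #{f ∈ Y \ X | r e f} ≤ 2) (hY : ∀ f ∈ Y \ X, #{e ∈ X \ Y | r e f} ≤ 2) :
    ∃ p : α → Bool, (∀ e f, r e f → p e = p f) ∧
      #(splice X Y p) ≤ #(splice Y X p) + 1 ∧ #(splice Y X p) ≤ #(splice X Y p) + 1 := by
  have hdisj : Disjoint (X \ Y) (Y \ X) := disjoint_sdiff_sdiff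
  obtain ⟨p, hp, hbal⟩ :=
    (SimpleGraph.isBipartiteWith_fromRel (disjoint_coe.mpr hdisj) hr).exists_balanced_split
      (fun e he => (SimpleGraph.degree_fromRel_of_mem_left hdisj hr he).trans_le (hX e he))
      (fun f hf => (SimpleGraph.degree_fromRel_of_mem_right hdisj hr hf).trans_le (hY f hf))
  refine ⟨p, fun e f hef => hp e f ?_, ?_⟩
  · exact (SimpleGraph.fromRel_adj_iff_of_mem_left (disjoint_coe.mpr hdisj) hr
      (hr e f hef).1).mpr hef
  rw [card_splice, card_splice, inter_comm]
  rw [abs_le] at hbal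
  omega

end Finset

theorem stmt_13_general {E : Type*} [Fintype E] [DecidableEq E]
    (I : Finset E → Prop) (hdc : ∀ S T : Finset E, S ⊆ T → I T → I S)
    (hex : ∀ X Y : Finset E, I X → I Y → ∃ adj : E → E → Bool,
      (∀ e f, adj e f = true → e ∈ X \ Y ∧ f ∈ Y \ X) ∧
      (∀ e ∈ X \ Y, ((Y \ X).filter (fun f => adj e f = true)).card ≤ 2) ∧
      (∀ f ∈ Y \ X, ((X \ Y).filter (fun e => adj e f = true)).card ≤ 2) ∧
      (∀ A ⊆ X \ Y,
        I (A ∪ (Y \ ((Y \ X).filter (fun f => ∃ e ∈ A, adj e f = true)))))) :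
    ∀ w : E → ℝ, (∀ e, 0 ≤ w e) → ∀ OPT : ℕ → ℝ,
      (∀ k, IsGreatest {x : ℝ | ∃ S : Finset E, I S ∧ S.card ≤ k ∧ x = ∑ e ∈ S, w e}
        (OPT k)) →
      ∀ k, OPT k + OPT (k + 2) ≤ 2 * OPT (k + 1) := by
  intro w _ OPT hOPT k
  obtain ⟨X, hX, hXk, hXw⟩ := (hOPT k).1
  obtain ⟨Y, hY, hYk, hYw⟩ := (hOPT (k + 2)).1
  obtain ⟨adj, hadj, hdegX, hdegY, hexch⟩ := hex X Y hX hY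
  obtain ⟨p, hp, hbal⟩ := exists_balanced_splice hadj hdegX hdegY
  have hS₁ : I (splice X Y p) :=
    hdc _ _ (splice_subset_union_sdiff_filter hp) (hexch _ (filter_subset _ _))
  have hS₂ : I (splice Y X p) := by
    rw [splice_swap]
    exact hdc _ _ (splice_subset_union_sdiff_filter fun e f hef => by rw [hp e f hef])
      (hexch _ (filter_subset _ _))
  have hcard := sum_splice_add_sum_splice_swap X Y p fun _ => 1
  simp only [← card_eq_sum_ones] at hcard
  have h₁ := (hOPT (k + 1)).2 ⟨_, hS₁, by omega, rfl⟩
  have h₂ := (hOPT (k + 1)).2 ⟨_, hS₂, by omega, rfl⟩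
  linarith [sum_splice_add_sum_splice_swap X Y p w]

/-- Every strong 2-exchange system is concave: if, for all independent `X, Y`, there is a
bipartite exchange graph on color classes `X∖Y` and `Y∖X`, of maximum degree at most 2,
such that `A ∪ (Y ∖ N(A))` is independent for every `A ⊆ X∖Y`, then for every
nonnegative weight function the map `k ↦ OPT_k` is concave. -/
theorem stmt_13 {E : Type*} [Fintype E] [DecidableEq E]
    (I : Finset E → Prop) (hne : I ∅) (hdc : ∀ S T : Finset E, S ⊆ T → I T → I S)
    (hex : ∀ X Y : Finset E, I X → I Y → ∃ adj : E → E → Bool,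
      (∀ e f, adj e f = true → e ∈ X \ Y ∧ f ∈ Y \ X) ∧
      (∀ e ∈ X \ Y, ((Y \ X).filter (fun f => adj e f = true)).card ≤ 2) ∧
      (∀ f ∈ Y \ X, ((X \ Y).filter (fun e => adj e f = true)).card ≤ 2) ∧
      (∀ A ⊆ X \ Y,
        I (A ∪ (Y \ ((Y \ X).filter (fun f => ∃ e ∈ A, adj e f = true)))))) :
    ∀ w : E → ℝ, (∀ e, 0 ≤ w e) → ∀ OPT : ℕ → ℝ,
      (∀ k, IsGreatest {x : ℝ | ∃ S : Finset E, I S ∧ S.card ≤ k ∧ x = ∑ e ∈ S, w e}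
        (OPT k)) →
      ∀ k, OPT k + OPT (k + 2) ≤ 2 * OPT (k + 1) :=
  stmt_13_general I hdc hex
end

section
/- Let I be a finite independence system, w a nonnegative weight function, K = {|S| : S ∈ I}, and λ a probability distribution on I that is α-robust (i.e., E_{S∼λ}[w(S_k)] ≥ α·OPT_k for all k ∈ K). Then for every probability distribution μ on K there exists S in the support of λ with Σ_{k∈K} μ_k w(S_k) ≥ α · max over S* ∈ I of Σ_{k∈K} μ_k w(S*_k). -/
/-! Some `S` in the support of `λ` has `f(S) = ∑_k μ_k w(S_k)` at least the `λ`-mean of `f`.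
Exchanging the two sums, that mean is `∑_k μ_k E_λ[w(S_k)]`, which by robustness is at least
`α ∑_k μ_k OPT_k`, and `OPT_k ≥ w(S*_k)` because the `k` heaviest elements of an independent `S*`
form an independent set of size at most `k`. For `α < 0` nonnegativity of `w` suffices. -/

section TopWeight

variable {E : Type*} (w : E → ℝ)

theorem exists_subset_card_le_sum_eq_wTop (k : ℕ) (S : Finset E) :
    ∃ T ⊆ S, T.card ≤ k ∧ ∑ e ∈ T, w e = wTop w k S := by
  classical
  have hperm : (sortedDesc w S).Perm (S.toList.map w) := by
    rw [← Multiset.coe_eq_coe, sortedDesc, Multiset.sort_eq, ← Multiset.map_coe,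
      Finset.coe_toList]
  obtain ⟨l, hl, hsub⟩ := (List.take_sublist k _).subperm.trans hperm.subperm
  obtain ⟨x, hx, rfl⟩ := List.sublist_map_iff.mp hsub
  have hnd : x.Nodup := S.nodup_toList.sublist hx
  refine ⟨x.toFinset, fun e he => S.mem_toList.mp (hx.subset (List.mem_toFinset.mp he)), ?_, ?_⟩
  · rw [List.toFinset_card_of_nodup hnd, ← List.length_map (f := w), hl.length_eq]
    exact List.length_take_le _ _
  · rw [List.sum_toFinset _ hnd, wTop, hl.sum_eq]

theorem wTop_nonneg (hw : ∀ e, 0 ≤ w e) (k : ℕ) (S : Finset E) : 0 ≤ wTop w k S := by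
  obtain ⟨T, -, -, hT⟩ := exists_subset_card_le_sum_eq_wTop w k S
  exact hT ▸ Finset.sum_nonneg fun e _ => hw e

theorem wTop_le_of_mem_upperBounds {I : Finset E → Prop}
    (hdc : ∀ S T : Finset E, S ⊆ T → I T → I S) {k : ℕ} {b : ℝ}
    (hb : b ∈ upperBounds {x : ℝ | ∃ T : Finset E, I T ∧ T.card ≤ k ∧ x = ∑ e ∈ T, w e})
    {S : Finset E} (hS : I S) : wTop w k S ≤ b := by
  obtain ⟨T, hTS, hTk, hT⟩ := exists_subset_card_le_sum_eq_wTop w k S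
  exact hT ▸ hb ⟨T, hdc T S hTS hS, hTk, rfl⟩

end TopWeight

theorem exists_pos_and_sum_mul_le {ι : Type*} [Fintype ι] (p f : ι → ℝ)
    (hp0 : ∀ i, 0 ≤ p i) (hp1 : ∑ i, p i = 1) :
    ∃ i, 0 < p i ∧ ∑ j, p j * f j ≤ f i := by
  classical
  set m := ∑ j, p j * f j
  have hsupp : ∀ g : ι → ℝ, ∑ j with 0 < p j, p j * g j = ∑ j, p j * g j := fun g =>
    Finset.sum_filter_of_ne fun j _ hj => (hp0 j).lt_of_ne (left_ne_zero_of_mul hj).symm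
  have hne : (Finset.univ.filter (0 < p ·)).Nonempty := by
    have h1 := hsupp fun _ => 1
    simp only [mul_one, hp1] at h1
    exact Finset.nonempty_of_sum_ne_zero (h1 ▸ one_ne_zero)
  obtain ⟨i, hi, hmi⟩ := Finset.exists_le_of_sum_le hne (f := fun j => p j * m)
    (g := fun j => p j * f j) (by rw [hsupp, hsupp, ← Finset.sum_mul, hp1, one_mul])
  have hpi : 0 < p i := (Finset.mem_filter.mp hi).2
  exact ⟨i, hpi, le_of_mul_le_mul_left hmi hpi⟩

theorem stmt_14_general {E : Type*} [Fintype E]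
    (I : Finset E → Prop)
    (hdc : ∀ S T : Finset E, S ⊆ T → I T → I S)
    (w : E → ℝ) (hw : ∀ e, 0 ≤ w e)
    (K : Finset ℕ)
    (OPT : ℕ → ℝ)
    (hOPT : ∀ k, IsGreatest
      {x : ℝ | ∃ T : Finset E, I T ∧ T.card ≤ k ∧ x = ∑ e ∈ T, w e} (OPT k))
    (α : ℝ) (lam : Finset E → ℝ)
    (hlam0 : ∀ S, 0 ≤ lam S) (hlam1 : ∑ S : Finset E, lam S = 1)
    (hrobust : ∀ k ∈ K, α * OPT k ≤ ∑ S : Finset E, lam S * wTop w k S)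
    (μ : ℕ → ℝ) (hμ0 : ∀ k ∈ K, 0 ≤ μ k) :
    ∃ S : Finset E, 0 < lam S ∧ ∀ S' : Finset E, I S' →
      α * ∑ k ∈ K, μ k * wTop w k S' ≤ ∑ k ∈ K, μ k * wTop w k S := by
  set f : Finset E → ℝ := fun S => ∑ k ∈ K, μ k * wTop w k S
  have hf : ∀ S, 0 ≤ f S := fun S =>
    Finset.sum_nonneg fun k hk => mul_nonneg (hμ0 k hk) (wTop_nonneg w hw k S)
  obtain ⟨S, hS, hmean⟩ := exists_pos_and_sum_mul_le lam f hlam0 hlam1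
  refine ⟨S, hS, fun S' hS' => le_trans ?_ hmean⟩
  rcases le_or_gt 0 α with hα | hα
  · have hswap : ∑ T, lam T * f T = ∑ k ∈ K, μ k * ∑ T, lam T * wTop w k T := by
      simp only [f, Finset.mul_sum, mul_left_comm (lam _)]
      exact Finset.sum_comm
    rw [hswap, Finset.mul_sum]
    refine Finset.sum_le_sum fun k hk => ?_
    rw [mul_left_comm]
    gcongr
    · exact hμ0 k hk
    · exact (mul_le_mul_of_nonneg_left
        (wTop_le_of_mem_upperBounds w hdc (hOPT k).2 hS') hα).trans (hrobust k hk)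
  · exact (mul_nonpos_of_nonpos_of_nonneg hα.le (hf S')).trans
      (Finset.sum_nonneg fun T _ => mul_nonneg (hlam0 T) (hf T))

/-- If `λ` is an `α`-robust probability distribution on the independent sets of a finite
independence system, then for every probability distribution `μ` on `K = {|S| : S ∈ I}`
there is an `S` in the support of `λ` with
`∑_k μ_k w(S_k) ≥ α · max_{S* ∈ I} ∑_k μ_k w(S*_k)`. -/
theorem stmt_14 {E : Type*} [Fintype E] [DecidableEq E]
    (I : Finset E → Prop) [DecidablePred I]
    (hne : I ∅) (hdc : ∀ S T : Finset E, S ⊆ T → I T → I S)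
    (w : E → ℝ) (hw : ∀ e, 0 ≤ w e)
    (K : Finset ℕ) (hK : K = (Finset.univ.filter I).image Finset.card)
    (OPT : ℕ → ℝ)
    (hOPT : ∀ k, IsGreatest
      {x : ℝ | ∃ T : Finset E, I T ∧ T.card ≤ k ∧ x = ∑ e ∈ T, w e} (OPT k))
    (α : ℝ) (lam : Finset E → ℝ)
    (hlam0 : ∀ S, 0 ≤ lam S) (hlam1 : ∑ S : Finset E, lam S = 1)
    (hsupp : ∀ S, 0 < lam S → I S)
    (hrobust : ∀ k ∈ K, α * OPT k ≤ ∑ S : Finset E, lam S * wTop w k S)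
    (μ : ℕ → ℝ) (hμ0 : ∀ k ∈ K, 0 ≤ μ k) (hμ1 : ∑ k ∈ K, μ k = 1) :
    ∃ S : Finset E, 0 < lam S ∧ ∀ S' : Finset E, I S' →
      α * ∑ k ∈ K, μ k * wTop w k S' ≤ ∑ k ∈ K, μ k * wTop w k S :=
  stmt_14_general I hdc w hw K OPT hOPT α lam hlam0 hlam1 hrobust μ hμ0
end

section
/- In a finite two-player zero-sum game with strategy sets A and B and payoff u : A × B → ℝ≥0, if λ is a mixed strategy of Alice satisfying E_{a∼λ}[u(a,b)] ≥ α·max_{a*∈A} u(a*,b) for every b ∈ B, then for every mixed strategy μ of Bob there exists a pure strategy a in the support of λ with E_{b∼μ}[u(a,b)] ≥ α·max_{a*∈A} E_{b∼μ}[u(a*,b)]. -/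
open Finset

/-- In a finite two-player zero-sum game with nonnegative payoffs, if a mixed strategy
`λ` of Alice is `α`-robust (`E_{a∼λ}[u(a,b)] ≥ α·max_{a*} u(a*,b)` for every pure `b`),
then for every mixed strategy `μ` of Bob there is a pure strategy `a` in the support of
`λ` that is an `α`-approximate best response to `μ`. -/
theorem stmt_15 {A B : Type*} [Fintype A] [Fintype B] [Nonempty A] [Nonempty B]
    (u : A → B → ℝ) (hu : ∀ a b, 0 ≤ u a b)
    (α : ℝ) (hα0 : 0 ≤ α) (hα1 : α ≤ 1)
    (lam : A → ℝ) (hlam0 : ∀ a, 0 ≤ lam a) (hlam1 : ∑ a : A, lam a = 1)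
    (hrobust : ∀ b : B,
      α * (Finset.univ.sup' Finset.univ_nonempty (fun a : A => u a b))
        ≤ ∑ a : A, lam a * u a b) :
    ∀ μ : B → ℝ, (∀ b, 0 ≤ μ b) → (∑ b : B, μ b = 1) →
      ∃ a : A, 0 < lam a ∧
        α * (Finset.univ.sup' Finset.univ_nonempty (fun a' : A => ∑ b : B, μ b * u a' b))
          ≤ ∑ b : B, μ b * u a b := by
  intro μ hμ0 hμ1
  set f : A → ℝ := fun a => ∑ b : B, μ b * u a b with hf
  set T : ℝ := α * (Finset.univ.sup' Finset.univ_nonempty f) with hT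
  have step1 : T ≤ ∑ a : A, lam a * f a := by
    obtain ⟨a0, _, ha0⟩ := Finset.exists_mem_eq_sup' Finset.univ_nonempty f
    have h1 : T = ∑ b : B, μ b * (α * u a0 b) := by
      rw [hT, ha0, hf]
      rw [Finset.mul_sum]
      congr 1; ext b; ring
    rw [h1]
    have h2 : ∀ b, μ b * (α * u a0 b) ≤
        μ b * (α * (Finset.univ.sup' Finset.univ_nonempty (fun a : A => u a b))) := by
      intro b
      apply mul_le_mul_of_nonneg_left _ (hμ0 b)
      apply mul_le_mul_of_nonneg_left _ hα0
      exact Finset.le_sup' (fun a : A => u a b) (Finset.mem_univ a0)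
    calc ∑ b : B, μ b * (α * u a0 b)
        ≤ ∑ b : B, μ b * (α * (Finset.univ.sup' Finset.univ_nonempty (fun a : A => u a b))) :=
          Finset.sum_le_sum fun b _ => h2 b
      _ ≤ ∑ b : B, μ b * (∑ a : A, lam a * u a b) :=
          Finset.sum_le_sum fun b _ => mul_le_mul_of_nonneg_left (hrobust b) (hμ0 b)
      _ = ∑ a : A, lam a * f a := by
          simp only [hf, Finset.mul_sum]
          rw [Finset.sum_comm]
          congr 1; ext a; congr 1; ext b; ring
  -- step 2: find a in support with f a ≥ weighted average
  by_contra hcon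
  push_neg at hcon
  have hlt : ∀ a : A, 0 < lam a → lam a * f a < lam a * T := by
    intro a ha
    exact mul_lt_mul_of_pos_left (hcon a ha) ha
  have hle : ∀ a : A, lam a * f a ≤ lam a * T := by
    intro a
    rcases lt_or_eq_of_le (hlam0 a) with h | h
    · exact le_of_lt (hlt a h)
    · simp [← h]
  obtain ⟨a1, ha1⟩ : ∃ a : A, 0 < lam a := by
    by_contra h
    push_neg at h
    have : ∀ a : A, lam a = 0 := fun a => le_antisymm (h a) (hlam0 a)
    simp [this] at hlam1
  have : ∑ a : A, lam a * f a < ∑ a : A, lam a * T := by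
    apply Finset.sum_lt_sum (fun a _ => hle a) ⟨a1, Finset.mem_univ a1, hlt a1 ha1⟩
  rw [← Finset.sum_mul, hlam1, one_mul] at this
  linarith
end
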